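/- arXiv:2101.10185 — 9 statements merged into one kernel-verified Lean document; each statement's English description precedes it below -/
import Mathlib

section
/- For every natural number n ≥ 3, the accurate domination number of the cycle C_n on n vertices satisfies γ_a(C_n) = ⌊n/3⌋ − ⌊3/n⌋ + 2. -/
/-- `D` is a dominating set of the simple graph `G`: every vertex not in `D`
is adjacent to at least one vertex in `D`. -/
def IsDomSet {V : Type*} (G : SimpleGraph V) (D : Finset V) : Prop :=
  ∀ v : V, v ∉ D → ∃ u ∈ D, G.Adj u v

/-- `D` is an accurate dominating set of `G`: a dominating set such that no subset of
`V \ D` of cardinality `|D|` is a dominating set of `G`. -/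
def IsAccDomSet {V : Type*} (G : SimpleGraph V) (D : Finset V) : Prop :=
  IsDomSet G D ∧
    ∀ E : Finset V, (∀ v ∈ E, v ∉ D) → E.card = D.card → ¬ IsDomSet G E

/-- The domination number of `G`: the minimum cardinality of a dominating set. -/
noncomputable def domNum {V : Type*} (G : SimpleGraph V) : ℕ :=
  sInf {k | ∃ D : Finset V, IsDomSet G D ∧ D.card = k}

/-- The accurate domination number of `G`: the minimum cardinality of an accurate
dominating set. -/
noncomputable def accDomNum {V : Type*} (G : SimpleGraph V) : ℕ :=
  sInf {k | ∃ D : Finset V, IsAccDomSet G D ∧ D.card = k}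

/-- `d(G,i)`: the number of dominating sets of `G` of cardinality `i`. -/
noncomputable def numDomSets {V : Type*} (G : SimpleGraph V) (i : ℕ) : ℕ :=
  Set.ncard {D : Finset V | IsDomSet G D ∧ D.card = i}

/-- `d_a(G,i)`: the number of accurate dominating sets of `G` of cardinality `i`. -/
noncomputable def numAccDomSets {V : Type*} (G : SimpleGraph V) (i : ℕ) : ℕ :=
  Set.ncard {D : Finset V | IsAccDomSet G D ∧ D.card = i}

/-!
Translating a dominating set `D` of `C_n` by one step gives a dominating set `D + 1` of the same
size, disjoint from `D` unless `D` contains two consecutive vertices. Since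
`C_n = D ∪ (D + 1) ∪ (D - 1)`, each consecutive pair costs two in the bound `n ≤ 3 |D|`; so if
`|D| ≤ ⌊n/3⌋ + 1` there is at most one such pair `d, d + 1`, and replacing `d + 1` by `d - 1` in
`D + 1` gives a dominating set disjoint from `D`. Padding it with unused vertices (possible as
`2 |D| ≤ n`) shows that `D` is not accurate.

Conversely, `{0, 1} ∪ {2, 5, …, 3 ⌊n/3⌋ - 1}` dominates `C_n` and contains the closed
neighbourhood of `1`, which no set disjoint from it can dominate. For `n = 3` the set `{0, 1}` is
accurate because its complement is too small.
-/

open Finset SimpleGraph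
open scoped Pointwise

section Domination

variable {V : Type*} {G : SimpleGraph V} {D E : Finset V}

lemma IsDomSet.mono (hD : IsDomSet G D) (hDE : D ⊆ E) : IsDomSet G E := fun v hv =>
  let ⟨u, hu, huv⟩ := hD v fun h => hv (hDE h)
  ⟨u, hDE hu, huv⟩

lemma IsDomSet.of_sdiff_dominated (hD : IsDomSet G D)
    (h : ∀ x ∈ D, x ∉ E → ∀ w ∉ E, (w = x ∨ G.Adj x w) → ∃ u ∈ E, G.Adj u w) :
    IsDomSet G E := by
  intro v hv
  by_cases hvD : v ∈ D
  · exact h v hvD (by simpa using hv) v hv (Or.inl rfl)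
  obtain ⟨u, hu, huv⟩ := hD v hvD
  by_cases huE : u ∈ E
  · exact ⟨u, huE, huv⟩
  · exact h u hu huE v hv (Or.inr huv)

lemma IsDomSet.isAccDomSet_of_card_lt [Fintype V] (hD : IsDomSet G D)
    (hcard : Fintype.card V < 2 * #D) : IsAccDomSet G D := by
  classical
  refine ⟨hD, fun E hE hED _ => ?_⟩
  have : #E + #D ≤ Fintype.card V := by
    rw [← card_union_of_disjoint (disjoint_left.2 hE)]
    exact card_le_univ _
  omega

lemma IsDomSet.isAccDomSet_of_closedNbhd_subset {v : V} (hD : IsDomSet G D) (hv : v ∈ D)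
    (hN : ∀ u, G.Adj u v → u ∈ D) : IsAccDomSet G D :=
  ⟨hD, fun _ hE _ hdom =>
    let ⟨u, hu, huv⟩ := hdom v fun h => hE v h hv
    hE u hu (hN u huv)⟩

lemma IsDomSet.not_isAccDomSet_of_disjoint [Fintype V] [DecidableEq V] (hE : IsDomSet G E)
    (hED : Disjoint E D) (hcard : #E ≤ #D) (hV : 2 * #D ≤ Fintype.card V) :
    ¬ IsAccDomSet G D := by
  intro hD
  obtain ⟨F, hEF, hFD, hF⟩ := exists_subsuperset_card_eq (subset_compl_iff_disjoint_right.2 hED)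
    hcard (by rw [card_compl]; omega)
  exact hD.2 F (fun v hv => mem_compl.1 (hFD hv)) hF (hE.mono hEF)

lemma accDomNum_eq_of_isAccDomSet {k : ℕ} (hD : IsAccDomSet G D) (hk : #D = k)
    (hmin : ∀ E, IsAccDomSet G E → k ≤ #E) : accDomNum G = k :=
  le_antisymm (Nat.sInf_le ⟨D, hD, hk⟩)
    (le_csInf ⟨k, D, hD, hk⟩ fun _ ⟨E, hE, hEk⟩ => hEk ▸ hmin E hE)

end Domination

lemma Finset.mem_vadd_finset_iff_sub_mem {α : Type*} [AddCommGroup α] [DecidableEq α]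
    {a b : α} {s : Finset α} : b ∈ a +ᵥ s ↔ b - a ∈ s := by
  rw [← neg_vadd_mem_iff, vadd_eq_add, neg_add_eq_sub]

lemma Fin.card_filter_univ_val (n : ℕ) (p : ℕ → Prop) [DecidablePred p] :
    #{v : Fin n | p v} = #{k ∈ range n | p k} := by
  rw [← card_map Fin.valEmbedding, ← Nat.Iio_eq_range, ← Fin.map_valEmbedding_univ, filter_map]
  rfl

section Cycle

variable {n : ℕ} {D : Finset (Fin (n + 2))}

lemma cycleGraph_adj_iff_eq {u v : Fin (n + 2)} :
    (cycleGraph (n + 2)).Adj u v ↔ u = v - 1 ∨ u = v + 1 := by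
  rw [cycleGraph_adj, sub_eq_iff_eq_add, sub_eq_iff_eq_add', eq_comm (a := v), ← eq_sub_iff_add_eq,
    add_comm (1 : Fin (n + 2)), or_comm]

lemma isDomSet_cycleGraph_iff :
    IsDomSet (cycleGraph (n + 2)) D ↔ ∀ v ∉ D, v - 1 ∈ D ∨ v + 1 ∈ D := by
  simp [IsDomSet, cycleGraph_adj_iff_eq, and_or_left, exists_or]

lemma IsDomSet.vadd_cycleGraph (hD : IsDomSet (cycleGraph (n + 2)) D) (c : Fin (n + 2)) :
    IsDomSet (cycleGraph (n + 2)) (c +ᵥ D) := by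
  rw [isDomSet_cycleGraph_iff] at hD ⊢
  simp only [mem_vadd_finset_iff_sub_mem]
  intro v hv
  rcases hD (v - c) hv with h | h
  · left; rwa [sub_right_comm]
  · right; rwa [← sub_add_eq_add_sub]

lemma IsDomSet.card_add_two_mul_card_inter_vadd_le (hD : IsDomSet (cycleGraph (n + 2)) D) :
    n + 2 + 2 * #(D ∩ ((1 : Fin (n + 2)) +ᵥ D)) ≤ 3 * #D := by
  set A := (1 : Fin (n + 2)) +ᵥ D
  set B := (-1 : Fin (n + 2)) +ᵥ D
  have hcover : (univ : Finset (Fin (n + 2))) ⊆ D ∪ A ∪ B := by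
    rw [isDomSet_cycleGraph_iff] at hD
    intro v _
    simp only [mem_union, A, B, mem_vadd_finset_iff_sub_mem, sub_neg_eq_add]
    by_cases hv : v ∈ D
    · exact Or.inl (Or.inl hv)
    · rcases hD v hv with h | h
      · exact Or.inl (Or.inr h)
      · exact Or.inr h
  have hB : #(D ∩ B) = #(D ∩ A) := by
    rw [← card_vadd_finset (1 : Fin (n + 2)), vadd_finset_inter, vadd_neg_vadd, inter_comm]
  have hunion := card_le_card hcover
  have hDA := card_union_add_card_inter D A
  have hDAB := card_union_add_card_inter (D ∪ A) B
  have hDB : #(D ∩ B) ≤ #((D ∪ A) ∩ B) :=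
    card_le_card (inter_subset_inter subset_union_left subset_rfl)
  simp only [card_univ, Fintype.card_fin, A, B, card_vadd_finset] at *
  omega

lemma exists_disjoint_isDomSet_of_inter_vadd_eq_singleton {d : Fin (n + 2)}
    (hD : IsDomSet (cycleGraph (n + 2)) D) (hpair : D ∩ ((1 : Fin (n + 2)) +ᵥ D) = {d + 1}) :
    ∃ E, IsDomSet (cycleGraph (n + 2)) E ∧ Disjoint E D ∧ #E ≤ #D := by
  have hpair' : ∀ v, v ∈ D → v - 1 ∈ D → v = d + 1 := fun v hv hv' => by
    have := mem_inter.2 ⟨hv, mem_vadd_finset_iff_sub_mem.2 hv'⟩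
    rwa [hpair, mem_singleton] at this
  obtain ⟨hd1, hdA⟩ := mem_inter.1 (hpair ▸ mem_singleton_self (d + 1))
  have hd : d ∈ D := by rwa [mem_vadd_finset_iff_sub_mem, add_sub_cancel_right] at hdA
  set E := insert (d - 1) (((1 : Fin (n + 2)) +ᵥ D).erase (d + 1))
  have hd2 : d + 1 + 1 ∈ E := mem_insert_of_mem <| mem_erase.2
    ⟨by simp, by rwa [mem_vadd_finset_iff_sub_mem, add_sub_cancel_right]⟩
  refine ⟨E, (hD.vadd_cycleGraph 1).of_sdiff_dominated ?_, ?_, ?_⟩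
  · intro x hx hxE w hwE hw
    obtain rfl : x = d + 1 := by
      by_contra h
      exact hxE (mem_insert_of_mem (mem_erase.2 ⟨h, hx⟩))
    rw [cycleGraph_adj_iff_eq] at hw
    rcases hw with rfl | h | h
    · exact ⟨d + 1 + 1, hd2, cycleGraph_adj_iff_eq.2 (Or.inr rfl)⟩
    · exact absurd (h ▸ hd2 : w - 1 + 1 ∈ E) (by rwa [sub_add_cancel])
    · obtain rfl : w = d := (add_right_cancel h).symm
      exact ⟨w - 1, mem_insert_self _ _, cycleGraph_adj_iff_eq.2 (Or.inl rfl)⟩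
  · refine Finset.disjoint_left.2 fun v hv hvD => ?_
    rcases mem_insert.1 hv with rfl | hv
    · simpa using hpair' d hd hvD
    · obtain ⟨hne, hvA⟩ := mem_erase.1 hv
      exact hne (hpair' v hvD (mem_vadd_finset_iff_sub_mem.1 hvA))
  · calc #E ≤ #(((1 : Fin (n + 2)) +ᵥ D).erase (d + 1)) + 1 := card_insert_le _ _
      _ = #D := by
        rw [card_erase_of_mem hdA, card_vadd_finset, Nat.sub_add_cancel (card_pos.2 ⟨d, hd⟩)]

theorem not_isAccDomSet_cycleGraph (hD : IsDomSet (cycleGraph (n + 2)) D)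
    (h3 : 3 * #D ≤ n + 5) (h2 : 2 * #D ≤ n + 2) : ¬ IsAccDomSet (cycleGraph (n + 2)) D := by
  obtain ⟨E, hE, hED, hcard⟩ : ∃ E, IsDomSet (cycleGraph (n + 2)) E ∧ Disjoint E D ∧ #E ≤ #D := by
    rcases (D ∩ ((1 : Fin (n + 2)) +ᵥ D)).eq_empty_or_nonempty with hempty | ⟨a, ha⟩
    · exact ⟨(1 : Fin (n + 2)) +ᵥ D, hD.vadd_cycleGraph 1,
        disjoint_iff_inter_eq_empty.2 (by rwa [inter_comm]), (card_vadd_finset _ _).le⟩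
    · have hle : #(D ∩ ((1 : Fin (n + 2)) +ᵥ D)) ≤ 1 := by
        have := hD.card_add_two_mul_card_inter_vadd_le
        omega
      refine exists_disjoint_isDomSet_of_inter_vadd_eq_singleton (d := a - 1) hD ?_
      rw [sub_add_cancel]
      exact eq_singleton_iff_unique_mem.2 ⟨ha, fun b hb => card_le_one.1 hle b hb a ha⟩
  exact hE.not_isAccDomSet_of_disjoint hED hcard (by simpa using h2)

end Cycle

def cycleAccDomSet (n : ℕ) : Finset (Fin n) :=
  {v | (v : ℕ) < 2 ∨ ((v : ℕ) % 3 = 2 ∧ (v : ℕ) < 3 * (n / 3))}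

lemma mem_cycleAccDomSet {n : ℕ} {v : Fin n} :
    v ∈ cycleAccDomSet n ↔ (v : ℕ) < 2 ∨ ((v : ℕ) % 3 = 2 ∧ (v : ℕ) < 3 * (n / 3)) := by
  simp [cycleAccDomSet]

lemma card_cycleAccDomSet {n : ℕ} (hn : 2 ≤ n) : #(cycleAccDomSet n) = n / 3 + 2 := by
  rw [cycleAccDomSet, Fin.card_filter_univ_val n fun k => k < 2 ∨ (k % 3 = 2 ∧ k < 3 * (n / 3))]
  have : {k ∈ range n | k < 2 ∨ (k % 3 = 2 ∧ k < 3 * (n / 3))} =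
      (range (n / 3 + 2)).image (fun j => if j < 2 then j else 3 * j - 4) := by
    ext k
    simp only [mem_filter, mem_range, mem_image]
    constructor
    · rintro ⟨hk, hP⟩
      refine ⟨if k < 2 then k else (k + 4) / 3, ?_, ?_⟩ <;> split_ifs <;> omega
    · rintro ⟨j, hj, rfl⟩
      split_ifs <;> omega
  rw [this, card_image_of_injOn, card_range]
  intro a _ b _ h
  simp only at h
  split_ifs at h <;> omega

lemma isDomSet_cycleAccDomSet (n : ℕ) :
    IsDomSet (cycleGraph (n + 3)) (cycleAccDomSet (n + 3)) := by
  rw [isDomSet_cycleGraph_iff]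
  intro v hv
  rw [mem_cycleAccDomSet] at hv
  have hprev : ((v - 1 : Fin (n + 3)) : ℕ) = v - 1 := by
    rw [Fin.coe_sub_one, if_neg]
    rintro rfl
    simp at hv
  have hnext := Fin.val_add_one v
  rw [mem_cycleAccDomSet, mem_cycleAccDomSet, hprev, hnext]
  split_ifs with hlast
  · simp
  · have : (v : ℕ) ≠ n + 2 := fun h => hlast (Fin.ext h)
    omega

lemma isAccDomSet_cycleAccDomSet (n : ℕ) :
    IsAccDomSet (cycleGraph (n + 3)) (cycleAccDomSet (n + 3)) := by
  refine (isDomSet_cycleAccDomSet n).isAccDomSet_of_closedNbhd_subset (v := 1) ?_ fun u hu => ?_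
  · simp [mem_cycleAccDomSet]
  · rw [cycleGraph_adj_iff_eq] at hu
    rcases hu with rfl | rfl
    · simp [mem_cycleAccDomSet]
    · rw [mem_cycleAccDomSet, Fin.val_add, Fin.val_one, Nat.mod_eq_of_lt (by omega)]
      omega

/-- For every `n ≥ 3`, the accurate domination number of the cycle `C_n` equals
`⌊n/3⌋ - ⌊3/n⌋ + 2`. -/
theorem accDomNum_cycleGraph (n : ℕ) (hn : 3 ≤ n) :
    accDomNum (SimpleGraph.cycleGraph n) = n / 3 - 3 / n + 2 := by
  obtain ⟨m, rfl⟩ := Nat.exists_eq_add_of_le' hn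
  rcases Nat.eq_zero_or_pos m with rfl | hm
  · refine accDomNum_eq_of_isAccDomSet (D := {0, 1}) ?_ rfl fun D hD => ?_
    · exact IsDomSet.isAccDomSet_of_card_lt (isDomSet_cycleGraph_iff.2 (by decide)) (by decide)
    · by_contra! h
      exact not_isAccDomSet_cycleGraph (n := 1) hD.1 (by omega) (by omega) hD
  · rw [Nat.div_eq_of_lt (by omega : 3 < m + 3), Nat.sub_zero]
    refine accDomNum_eq_of_isAccDomSet (isAccDomSet_cycleAccDomSet m)
      (card_cycleAccDomSet (by omega)) fun D hD => ?_
    by_contra! h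
    exact not_isAccDomSet_cycleGraph (n := m + 1) hD.1 (by omega) (by omega) hD
end

section
/- For every natural number n ≥ 1 with n ∉ {2, 4}, the accurate domination number of the path P_n on n vertices satisfies γ_a(P_n) = ⌈n/3⌉. -/
open Finset

/-! ### Auxiliary material -/

/-- closed neighborhood in the path graph, as a filter -/
def nbhd (n : ℕ) (u : Fin n) : Finset (Fin n) :=
  univ.filter (fun w => w.val ≤ u.val + 1 ∧ u.val ≤ w.val + 1)

lemma card_nbhd_le {n : ℕ} (u : Fin n) : (nbhd n u).card ≤ 3 := by
  have h : (nbhd n u).card ≤ (Finset.Icc (u.val - 1) (u.val + 1)).card := by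
    apply Finset.card_le_card_of_injOn (fun w => w.val)
    · intro w hw
      simp [nbhd] at hw
      simp [Finset.mem_Icc]; omega
    · intro a _ b _ hab; exact Fin.val_injective hab
  have : (Finset.Icc (u.val - 1) (u.val + 1)).card = (u.val+1) + 1 - (u.val - 1) := Nat.card_Icc _ _
  omega

lemma card_le_of_sub_biUnion {n : ℕ} {I E : Finset (Fin n)}
    (h : I ⊆ E.biUnion (nbhd n)) : I.card ≤ 3 * E.card := by
  calc I.card ≤ (E.biUnion (nbhd n)).card := Finset.card_le_card h
    _ ≤ ∑ u ∈ E, (nbhd n u).card := Finset.card_biUnion_le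
    _ ≤ ∑ u ∈ E, 3 := Finset.sum_le_sum (fun u _ => card_nbhd_le u)
    _ = 3 * E.card := by rw [Finset.sum_const]; ring

lemma mem_nbhd_of_adj {n : ℕ} {u v : Fin n} (h : (SimpleGraph.pathGraph n).Adj u v) :
    v ∈ nbhd n u := by
  rw [SimpleGraph.pathGraph_adj] at h
  simp [nbhd]; omega

lemma mem_nbhd_self {n : ℕ} (u : Fin n) : u ∈ nbhd n u := by simp [nbhd]

lemma domset_card_lb {n : ℕ} {E : Finset (Fin n)}
    (h : IsDomSet (SimpleGraph.pathGraph n) E) : n ≤ 3 * E.card := by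
  have hsub : (univ : Finset (Fin n)) ⊆ E.biUnion (nbhd n) := by
    intro v _
    rw [Finset.mem_biUnion]
    by_cases hv : v ∈ E
    · exact ⟨v, hv, mem_nbhd_self v⟩
    · obtain ⟨u, hu, hadj⟩ := h v hv
      exact ⟨u, hu, mem_nbhd_of_adj hadj⟩
  have := card_le_of_sub_biUnion hsub
  simpa using this

/-- transfer cardinality of a val-filter on `Fin n` to a filter on `range n` -/
lemma card_filter_fin (n : ℕ) (p : ℕ → Prop) [DecidablePred p] :
    (univ.filter (fun v : Fin n => p v.val)).card = ((range n).filter p).card := by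
  apply Finset.card_bij (fun v _ => v.val)
  · intro a ha; simp at ha ⊢; exact ha
  · intro a _ b _ hab; exact Fin.val_injective hab
  · intro b hb; simp at hb; exact ⟨⟨b, hb.1⟩, by simp [hb.2]⟩

/-- domination at a concrete value -/
lemma dom_val {n : ℕ} {E : Finset (Fin n)} (hdom : IsDomSet (SimpleGraph.pathGraph n) E)
    {k : ℕ} (hk : k < n) (h : (⟨k, hk⟩ : Fin n) ∉ E) :
    ∃ u ∈ E, u.val + 1 = k ∨ k + 1 = u.val := by
  obtain ⟨u, hu, hadj⟩ := hdom _ h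
  rw [SimpleGraph.pathGraph_adj] at hadj
  exact ⟨u, hu, hadj⟩

lemma forcing {n m : ℕ} (hm : 1 ≤ m) (h3m : 3*m ≤ n) {E : Finset (Fin n)}
    (hdom : IsDomSet (SimpleGraph.pathGraph n) E)
    (havoid : ∀ v ∈ E, v.val < 3*m → v.val % 3 ≠ 1)
    (hlast : ∀ v ∈ E, v.val ≠ 3*m)
    (hcount : (E.filter (fun v => v.val < 3*m)).card ≤ m) : False := by
  have claim1 : ∀ j < m, ∃ v ∈ E, v.val < 3*m ∧ v.val / 3 = j := by
    intro j hj
    have hx : (⟨3*j+1, by omega⟩ : Fin n) ∉ E := by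
      intro h
      exact havoid _ h (show 3*j+1 < 3*m by omega) (show (3*j+1) % 3 = 1 by omega)
    obtain ⟨u, hu, hadj⟩ := dom_val hdom _ hx
    exact ⟨u, hu, by omega, by omega⟩
  set f : ℕ → ℕ := fun j => (E.filter (fun v => v.val < 3*m ∧ v.val / 3 = j)).card with hf
  have hbiUnion : E.filter (fun v => v.val < 3*m)
      = (range m).biUnion (fun j => E.filter (fun v => v.val < 3*m ∧ v.val / 3 = j)) := by
    ext v
    simp only [mem_filter, mem_biUnion, mem_range]
    constructor
    · rintro ⟨hv, hlt⟩
      exact ⟨v.val / 3, by omega, hv, hlt, rfl⟩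
    · rintro ⟨j, _, hv, hlt, _⟩
      exact ⟨hv, hlt⟩
  have hdisj : ∀ x ∈ range m, ∀ y ∈ range m, x ≠ y →
      Disjoint (E.filter (fun v => v.val < 3*m ∧ v.val / 3 = x))
        (E.filter (fun v => v.val < 3*m ∧ v.val / 3 = y)) := by
    intro x _ y _ hxy
    rw [Finset.disjoint_left]
    intro a ha ha'
    simp only [mem_filter] at ha ha'
    omega
  have hsum : ∑ j ∈ range m, f j ≤ m := by
    rw [hf]
    rw [← Finset.card_biUnion hdisj, ← hbiUnion]
    exact hcount
  have heach : ∀ j < m, 1 ≤ f j := by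
    intro j hj
    obtain ⟨v, hv, h1, h2⟩ := claim1 j hj
    apply Finset.card_pos.2
    exact ⟨v, by simp [hv, h1, h2]⟩
  have hone : ∀ j < m, f j = 1 := by
    intro j hj
    have hmem : j ∈ range m := mem_range.2 hj
    have h1 := Finset.sum_erase_add (range m) f hmem
    have h2 : ((range m).erase j).card • 1 ≤ ∑ i ∈ (range m).erase j, f i := by
      apply Finset.card_nsmul_le_sum
      intro x hx
      have := Finset.mem_of_mem_erase hx
      exact heach x (mem_range.1 this)
    rw [Finset.card_erase_of_mem hmem, Finset.card_range] at h2
    have := heach j hj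
    simp only [smul_eq_mul, mul_one] at h2
    omega
  have uniq : ∀ j < m, ∀ v ∈ E, ∀ w ∈ E, v.val < 3*m → w.val < 3*m →
      v.val / 3 = j → w.val / 3 = j → v.val = w.val := by
    intro j hj v hv w hw hv1 hw1 hv2 hw2
    obtain ⟨a, ha⟩ := Finset.card_eq_one.1 (hone j hj)
    have h1 : v ∈ E.filter (fun v => v.val < 3*m ∧ v.val / 3 = j) := by simp [hv, hv1, hv2]
    have h2 : w ∈ E.filter (fun v => v.val < 3*m ∧ v.val / 3 = j) := by simp [hw, hw1, hw2]
    rw [ha, Finset.mem_singleton] at h1 h2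
    rw [h1, h2]
  have forced : ∀ j, j < m → ∀ v ∈ E, v.val < 3*m → v.val / 3 = j → v.val = 3*j := by
    intro j
    induction j with
    | zero =>
      intro hj v hv hv1 hv2
      have hx : (⟨0, by omega⟩ : Fin n) ∈ E := by
        by_contra hx
        obtain ⟨u, hu, hadj⟩ := dom_val hdom _ hx
        have hu1 : u.val = 1 := by omega
        exact havoid u hu (by omega) (by omega)
      have hval : ((⟨0, by omega⟩ : Fin n)).val = 0 := rfl
      have := uniq 0 hj v hv _ hx hv1 (by omega) hv2 (by omega)
      omega
    | succ j ih =>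
      intro hj v hv hv1 hv2
      have hy : (⟨3*j+2, by omega⟩ : Fin n) ∉ E := by
        intro h
        have h' : ((⟨3*j+2, by omega⟩ : Fin n)).val = 3*j+2 := rfl
        have := ih (by omega) _ h (by omega) (by omega)
        omega
      obtain ⟨u, hu, hadj⟩ := dom_val hdom _ hy
      have hu3 : u.val = 3*j+1 ∨ u.val = 3*j+3 := by omega
      have huv : u.val = 3*j+3 := by
        rcases hu3 with h | h
        · exact absurd (by omega : u.val % 3 = 1) (havoid u hu (by omega))
        · exact h
      have := uniq (j+1) hj v hv u hu hv1 (by omega) hv2 (by omega)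
      omega
  have hy : (⟨3*m-1, by omega⟩ : Fin n) ∉ E := by
    intro h
    have h' : ((⟨3*m-1, by omega⟩ : Fin n)).val = 3*m-1 := rfl
    have := forced (m-1) (by omega) _ h (by omega) (by omega)
    omega
  obtain ⟨u, hu, hadj⟩ := dom_val hdom _ hy
  have : u.val = 3*m-2 ∨ u.val = 3*m := by omega
  rcases this with h | h
  · exact havoid u hu (by omega) (by omega)
  · exact hlast u hu h

/-! ### Cardinality computations -/

lemma cardD0 {n m : ℕ} (hn : n = 3*m) :
    (univ.filter (fun v : Fin n => v.val % 3 = 1)).card = m := by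
  rw [card_filter_fin n (fun k => k % 3 = 1)]
  have himg : ((range n).filter (fun k => k % 3 = 1)) = (range m).image (fun i => 3*i+1) := by
    ext k
    simp only [mem_filter, mem_range, mem_image]
    constructor
    · rintro ⟨h1, h2⟩; exact ⟨k/3, by omega, by omega⟩
    · rintro ⟨i, hi, rfl⟩; omega
  rw [himg, Finset.card_image_of_injective _ (fun a b h => by omega), card_range]

lemma cardD2 {n m : ℕ} (hn : n = 3*m+2) :
    (univ.filter (fun v : Fin n => (v.val % 3 = 1 ∧ v.val + 2 < n) ∨ v.val = 3*m)).card
      = m + 1 := by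
  rw [card_filter_fin n (fun k => (k % 3 = 1 ∧ k + 2 < n) ∨ k = 3*m)]
  have himg : ((range n).filter (fun k => (k % 3 = 1 ∧ k + 2 < n) ∨ k = 3*m))
      = insert (3*m) ((range m).image (fun i => 3*i+1)) := by
    ext k
    simp only [mem_filter, mem_range, mem_insert, mem_image]
    constructor
    · rintro ⟨h1, h2 | h2⟩
      · exact Or.inr ⟨k/3, by omega, by omega⟩
      · exact Or.inl h2
    · rintro (rfl | ⟨i, hi, rfl⟩)
      · omega
      · omega
  rw [himg]
  rw [Finset.card_insert_of_notMem (by simp only [mem_image, mem_range]; rintro ⟨i, hi, h⟩; omega),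
    Finset.card_image_of_injective _ (fun a b h => by omega), card_range]

lemma cardD1 {n m : ℕ} (hm : 2 ≤ m) (hn : n = 3*m+1) :
    (univ.filter (fun v : Fin n =>
      v.val = 1 ∨ (v.val % 3 = 0 ∧ 3 ≤ v.val ∧ v.val ≤ 3*m-3) ∨ v.val = 3*m-1)).card
      = m + 1 := by
  rw [card_filter_fin n (fun k => k = 1 ∨ (k % 3 = 0 ∧ 3 ≤ k ∧ k ≤ 3*m-3) ∨ k = 3*m-1)]
  have himg : ((range n).filter (fun k => k = 1 ∨ (k % 3 = 0 ∧ 3 ≤ k ∧ k ≤ 3*m-3) ∨ k = 3*m-1))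
      = insert 1 (insert (3*m-1) ((range (m-1)).image (fun i => 3*i+3))) := by
    ext k
    simp only [mem_filter, mem_range, mem_insert, mem_image]
    constructor
    · rintro ⟨h1, rfl | h2 | rfl⟩
      · exact Or.inl rfl
      · exact Or.inr (Or.inr ⟨k/3 - 1, by omega, by omega⟩)
      · exact Or.inr (Or.inl rfl)
    · rintro (rfl | rfl | ⟨i, hi, rfl⟩)
      · omega
      · omega
      · omega
  rw [himg]
  rw [Finset.card_insert_of_notMem, Finset.card_insert_of_notMem,
    Finset.card_image_of_injective _ (fun a b h => by omega), card_range]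
  · omega
  · simp only [mem_image, mem_range]; rintro ⟨i, hi, h⟩; omega
  · simp only [mem_insert, mem_image, mem_range]
    rintro (h | ⟨i, hi, h⟩) <;> omega

/-! ### The three constructions -/

lemma case0 {n m : ℕ} (hm : 1 ≤ m) (hn : n = 3*m) :
    ∃ D : Finset (Fin n), IsAccDomSet (SimpleGraph.pathGraph n) D ∧ D.card = m := by
  refine ⟨univ.filter (fun v => v.val % 3 = 1), ⟨?_, ?_⟩, cardD0 hn⟩
  · intro v hv
    have hv' : ¬ (v.val % 3 = 1) := by
      intro h; exact hv (by simp only [mem_filter, mem_univ, true_and]; exact h)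
    have hvlt : v.val < n := v.isLt
    rcases (by omega : v.val % 3 = 0 ∨ v.val % 3 = 2) with h | h
    · refine ⟨⟨v.val+1, by omega⟩, ?_, ?_⟩
      · simp only [mem_filter, mem_univ, true_and]
        show (v.val+1) % 3 = 1; omega
      · exact SimpleGraph.pathGraph_adj.2 (Or.inr rfl)
    · refine ⟨⟨v.val-1, by omega⟩, ?_, ?_⟩
      · simp only [mem_filter, mem_univ, true_and]
        show (v.val-1) % 3 = 1; omega
      · exact SimpleGraph.pathGraph_adj.2 (Or.inl (show (v.val-1)+1 = v.val by omega))
  · intro E hE hcardE hdomE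
    rw [cardD0 hn] at hcardE
    apply forcing hm (by omega) hdomE
    · intro v hv _ h
      exact hE v hv (by simp only [mem_filter, mem_univ, true_and]; exact h)
    · intro v hv
      have := v.isLt; omega
    · have : E.filter (fun v => v.val < 3*m) = E := by
        apply Finset.filter_true_of_mem
        intro v _; have := v.isLt; omega
      rw [this]; omega

lemma case2 {n m : ℕ} (hm : 1 ≤ m) (hn : n = 3*m+2) :
    ∃ D : Finset (Fin n), IsAccDomSet (SimpleGraph.pathGraph n) D ∧ D.card = m+1 := by
  refine ⟨univ.filter (fun v => (v.val % 3 = 1 ∧ v.val + 2 < n) ∨ v.val = 3*m),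
    ⟨?_, ?_⟩, cardD2 hn⟩
  · intro v hv
    have hv' : ¬ ((v.val % 3 = 1 ∧ v.val + 2 < n) ∨ v.val = 3*m) := by
      intro h; exact hv (by simp only [mem_filter, mem_univ, true_and]; exact h)
    push_neg at hv'
    have hvlt : v.val < n := v.isLt
    by_cases hA : v.val = 3*m+1
    · refine ⟨⟨3*m, by omega⟩, ?_, ?_⟩
      · simp only [mem_filter, mem_univ, true_and]
        exact Or.inr trivial
      · exact SimpleGraph.pathGraph_adj.2 (Or.inl (show 3*m+1 = v.val by omega))
    · have h0 : v.val % 3 = 0 ∨ v.val % 3 = 2 := by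
        by_cases h1 : v.val % 3 = 1
        · have := hv'.1 h1; have := hv'.2; omega
        · omega
      rcases h0 with h | h
      · refine ⟨⟨v.val+1, by omega⟩, ?_, ?_⟩
        · simp only [mem_filter, mem_univ, true_and]
          exact Or.inl ⟨show (v.val+1) % 3 = 1 by omega, show (v.val+1)+2 < n by
            have := hv'.2; omega⟩
        · exact SimpleGraph.pathGraph_adj.2 (Or.inr rfl)
      · refine ⟨⟨v.val-1, by omega⟩, ?_, ?_⟩
        · simp only [mem_filter, mem_univ, true_and]
          exact Or.inl ⟨show (v.val-1) % 3 = 1 by omega, show (v.val-1)+2 < n by omega⟩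
        · exact SimpleGraph.pathGraph_adj.2 (Or.inl (show (v.val-1)+1 = v.val by omega))
  · intro E hE hcardE hdomE
    rw [cardD2 hn] at hcardE
    have hE' : ∀ v ∈ E, ¬((v.val % 3 = 1 ∧ v.val + 2 < n) ∨ v.val = 3*m) := by
      intro v hv h
      exact hE v hv (by simp only [mem_filter, mem_univ, true_and]; exact h)
    have h31 : (⟨3*m+1, by omega⟩ : Fin n) ∈ E := by
      by_contra h31
      obtain ⟨u, hu, hadj⟩ := dom_val hdomE _ h31
      have hadj' : u.val = 3*m ∨ u.val = 3*m+2 := by omega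
      have := u.isLt
      have huval : u.val = 3*m := by omega
      exact hE' u hu (Or.inr huval)
    apply forcing hm (by omega) hdomE
    · intro v hv hlt h3
      have h' := hE' v hv
      push_neg at h'
      have := h'.1 h3; omega
    · intro v hv
      intro h
      exact hE' v hv (Or.inr h)
    · have hsub : E.filter (fun v => v.val < 3*m) ⊆ E.erase ⟨3*m+1, by omega⟩ := by
        intro v hv
        rw [mem_filter] at hv
        rw [Finset.mem_erase]
        exact ⟨Fin.ne_of_val_ne (show v.val ≠ 3*m+1 by omega), hv.1⟩
      have := Finset.card_le_card hsub
      rw [Finset.card_erase_of_mem h31, hcardE] at this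
      omega

lemma case1 {n m : ℕ} (hm : 2 ≤ m) (hn : n = 3*m+1) :
    ∃ D : Finset (Fin n), IsAccDomSet (SimpleGraph.pathGraph n) D ∧ D.card = m+1 := by
  refine ⟨univ.filter (fun v =>
      v.val = 1 ∨ (v.val % 3 = 0 ∧ 3 ≤ v.val ∧ v.val ≤ 3*m-3) ∨ v.val = 3*m-1),
    ⟨?_, ?_⟩, cardD1 hm hn⟩
  · intro v hv
    have hv' : ¬ (v.val = 1 ∨ (v.val % 3 = 0 ∧ 3 ≤ v.val ∧ v.val ≤ 3*m-3) ∨ v.val = 3*m-1) := by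
      intro h; exact hv (by simp only [mem_filter, mem_univ, true_and]; exact h)
    push_neg at hv'
    obtain ⟨hne1, hmid, hne2⟩ := hv'
    have hvlt : v.val < n := v.isLt
    by_cases hv0 : v.val = 0
    · refine ⟨⟨1, by omega⟩, ?_, ?_⟩
      · simp only [mem_filter, mem_univ, true_and]
        exact Or.inl trivial
      · exact SimpleGraph.pathGraph_adj.2 (Or.inr (show v.val + 1 = 1 by omega))
    · by_cases hv2 : v.val = 2
      · refine ⟨⟨1, by omega⟩, ?_, ?_⟩
        · simp only [mem_filter, mem_univ, true_and]
          exact Or.inl trivial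
        · exact SimpleGraph.pathGraph_adj.2 (Or.inl (show 1 + 1 = v.val by omega))
      · by_cases hv3m : v.val = 3*m
        · refine ⟨⟨3*m-1, by omega⟩, ?_, ?_⟩
          · simp only [mem_filter, mem_univ, true_and]
            exact Or.inr (Or.inr trivial)
          · exact SimpleGraph.pathGraph_adj.2 (Or.inl (show (3*m-1) + 1 = v.val by omega))
        · rcases (by omega : v.val % 3 = 0 ∨ v.val % 3 = 1 ∨ v.val % 3 = 2) with h | h | h
          · exfalso
            have := hmid h; omega
          · refine ⟨⟨v.val-1, by omega⟩, ?_, ?_⟩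
            · simp only [mem_filter, mem_univ, true_and]
              exact Or.inr (Or.inl ⟨show (v.val-1) % 3 = 0 by omega,
                show 3 ≤ v.val-1 by omega, show v.val-1 ≤ 3*m-3 by omega⟩)
            · exact SimpleGraph.pathGraph_adj.2 (Or.inl (show (v.val-1)+1 = v.val by omega))
          · refine ⟨⟨v.val+1, by omega⟩, ?_, ?_⟩
            · simp only [mem_filter, mem_univ, true_and]
              exact Or.inr (Or.inl ⟨show (v.val+1) % 3 = 0 by omega,
                show 3 ≤ v.val+1 by omega, show v.val+1 ≤ 3*m-3 by omega⟩)
            · exact SimpleGraph.pathGraph_adj.2 (Or.inr rfl)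
  · intro E hE hcardE hdomE
    rw [cardD1 hm hn] at hcardE
    have hE' : ∀ v ∈ E,
        ¬(v.val = 1 ∨ (v.val % 3 = 0 ∧ 3 ≤ v.val ∧ v.val ≤ 3*m-3) ∨ v.val = 3*m-1) := by
      intro v hv h
      exact hE v hv (by simp only [mem_filter, mem_univ, true_and]; exact h)
    have h0 : (⟨0, by omega⟩ : Fin n) ∈ E := by
      by_contra h0
      obtain ⟨u, hu, hadj⟩ := dom_val hdomE _ h0
      exact hE' u hu (Or.inl (by omega))
    have h2 : (⟨2, by omega⟩ : Fin n) ∈ E := by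
      by_contra h2
      obtain ⟨u, hu, hadj⟩ := dom_val hdomE _ h2
      rcases (by omega : u.val = 1 ∨ u.val = 3) with h | h
      · exact hE' u hu (Or.inl h)
      · exact hE' u hu (Or.inr (Or.inl (by omega)))
    have hl : (⟨3*m, by omega⟩ : Fin n) ∈ E := by
      by_contra hl
      obtain ⟨u, hu, hadj⟩ := dom_val hdomE _ hl
      have := u.isLt
      have huval : u.val = 3*m-1 := by omega
      exact hE' u hu (Or.inr (Or.inr huval))
    set T : Finset (Fin n) := {⟨0, by omega⟩, ⟨2, by omega⟩, ⟨3*m, by omega⟩} with hT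
    have hTsub : T ⊆ E := by
      rw [hT, Finset.insert_subset_iff, Finset.insert_subset_iff, Finset.singleton_subset_iff]
      exact ⟨h0, h2, hl⟩
    have hTcard : T.card = 3 := by
      rw [hT, Finset.card_insert_of_notMem, Finset.card_insert_of_notMem,
        Finset.card_singleton]
      · simp only [Finset.mem_singleton, Fin.mk.injEq]; omega
      · simp only [Finset.mem_insert, Finset.mem_singleton, Fin.mk.injEq]; omega
    have hEsdcard : (E \ T).card = m - 2 := by
      rw [Finset.card_sdiff_of_subset hTsub, hTcard, hcardE]; omega
    have hIcard : (univ.filter (fun v : Fin n => 4 ≤ v.val ∧ v.val ≤ 3*m-2)).card = 3*m-5 := by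
      rw [card_filter_fin n (fun k => 4 ≤ k ∧ k ≤ 3*m-2)]
      have himg : ((range n).filter (fun k => 4 ≤ k ∧ k ≤ 3*m-2))
          = (range (3*m-5)).image (fun i => i+4) := by
        ext k
        simp only [mem_filter, mem_range, mem_image]
        constructor
        · rintro ⟨h1, h2, h3⟩; exact ⟨k-4, by omega, by omega⟩
        · rintro ⟨i, hi, rfl⟩; omega
      rw [himg, Finset.card_image_of_injective _ (fun a b h => by omega), card_range]
    have hsub : (univ.filter (fun v : Fin n => 4 ≤ v.val ∧ v.val ≤ 3*m-2))
        ⊆ (E \ T).biUnion (nbhd n) := by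
      intro v hv
      rw [mem_filter] at hv
      obtain ⟨-, hv4, hvu⟩ := hv
      rw [Finset.mem_biUnion]
      by_cases hvE : v ∈ E
      · refine ⟨v, ?_, mem_nbhd_self v⟩
        rw [Finset.mem_sdiff]
        refine ⟨hvE, ?_⟩
        rw [hT]
        simp only [Finset.mem_insert, Finset.mem_singleton]
        push_neg
        exact ⟨Fin.ne_of_val_ne (show v.val ≠ 0 by omega),
          Fin.ne_of_val_ne (show v.val ≠ 2 by omega),
          Fin.ne_of_val_ne (show v.val ≠ 3*m by omega)⟩
      · obtain ⟨u, hu, hadj⟩ := hdomE v hvE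
        have hval := SimpleGraph.pathGraph_adj.1 hadj
        refine ⟨u, ?_, mem_nbhd_of_adj hadj⟩
        rw [Finset.mem_sdiff]
        refine ⟨hu, ?_⟩
        rw [hT]
        simp only [Finset.mem_insert, Finset.mem_singleton]
        push_neg
        exact ⟨Fin.ne_of_val_ne (show u.val ≠ 0 by omega),
          Fin.ne_of_val_ne (show u.val ≠ 2 by omega),
          Fin.ne_of_val_ne (show u.val ≠ 3*m by omega)⟩
    have hfinal := card_le_of_sub_biUnion hsub
    rw [hIcard, hEsdcard] at hfinal
    omega

lemma accDom_glue {n : ℕ} (k : ℕ) {D : Finset (Fin n)} (hD : IsAccDomSet (SimpleGraph.pathGraph n) D)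
    (hcard : D.card = k) (hk : 3*k ≤ n + 2) :
    accDomNum (SimpleGraph.pathGraph n) = k := by
  have hmem : k ∈ {k | ∃ D : Finset (Fin n),
      IsAccDomSet (SimpleGraph.pathGraph n) D ∧ D.card = k} := ⟨D, hD, hcard⟩
  show sInf _ = k
  apply le_antisymm (Nat.sInf_le hmem)
  obtain ⟨D', hD', hc'⟩ := Nat.sInf_mem (⟨k, hmem⟩ : Set.Nonempty _)
  have hlb := domset_card_lb hD'.1
  omega

/-- For every `n ≥ 1` with `n ∉ {2, 4}`, the accurate domination number of the path
`P_n` equals `⌈n/3⌉`. -/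
theorem accDomNum_pathGraph (n : ℕ) (hn : 1 ≤ n) (h2 : n ≠ 2) (h4 : n ≠ 4) :
    accDomNum (SimpleGraph.pathGraph n) = (n + 2) / 3 := by
  by_cases h1 : n = 1
  · subst h1
    have hD : IsAccDomSet (SimpleGraph.pathGraph 1) (univ : Finset (Fin 1)) := by
      constructor
      · intro v hv; exact absurd (mem_univ v) hv
      · intro E hE hc
        have hE0 : E = ∅ := Finset.eq_empty_of_forall_notMem (fun v hv => hE v hv (mem_univ v))
        rw [hE0] at hc
        simp at hc
      
    have := accDom_glue 1 hD (by simp) (by omega)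
    rw [this]
  · have hdm := Nat.div_add_mod n 3
    rcases (by omega : n % 3 = 0 ∨ n % 3 = 1 ∨ n % 3 = 2) with h | h | h
    · obtain ⟨D, hD, hc⟩ := case0 (n := n) (m := n/3) (by omega) (by omega)
      rw [accDom_glue (n/3) hD hc (by omega)]
      omega
    · obtain ⟨D, hD, hc⟩ := case1 (n := n) (m := n/3) (by omega) (by omega)
      rw [accDom_glue (n/3+1) hD hc (by omega)]
      omega
    · obtain ⟨D, hD, hc⟩ := case2 (n := n) (m := n/3) (by omega) (by omega)
      rw [accDom_glue (n/3+1) hD hc (by omega)]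
      omega
end

section
/- Let B_n denote the book graph, the Cartesian product of the star K_{1,n} with K_2. Then γ_a(B_2) = 4, and for every natural number n ≥ 3 one has γ(B_n) = γ_a(B_n) = 2. -/
open SimpleGraph in
/-- The book graph `B_n = K_{1,n} □ K_2`. -/
def bookGraph (n : ℕ) : SimpleGraph ((Fin 1 ⊕ Fin n) × Fin 2) :=
  completeBipartiteGraph (Fin 1) (Fin n) □ (⊤ : SimpleGraph (Fin 2))

lemma bookGraph_adj {n : ℕ} {a b : (Fin 1 ⊕ Fin n) × Fin 2} :
    (bookGraph n).Adj a b ↔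
      ((a.1.isLeft ∧ b.1.isRight ∨ a.1.isRight ∧ b.1.isLeft) ∧ a.2 = b.2) ∨
      (a.2 ≠ b.2 ∧ a.1 = b.1) := by
  simp [bookGraph, SimpleGraph.boxProd_adj]

instance (n : ℕ) : DecidableRel (bookGraph n).Adj := fun _ _ =>
  decidable_of_iff _ bookGraph_adj.symm

instance (n : ℕ) (D : Finset ((Fin 1 ⊕ Fin n) × Fin 2)) :
    Decidable (IsDomSet (bookGraph n) D) := by unfold IsDomSet; infer_instance

instance (n : ℕ) (D : Finset ((Fin 1 ⊕ Fin n) × Fin 2)) :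
    Decidable (IsAccDomSet (bookGraph n) D) := by unfold IsAccDomSet; infer_instance

abbrev BV (n : ℕ) := (Fin 1 ⊕ Fin n) × Fin 2

def center (n : ℕ) : Finset (BV n) := {(Sum.inl 0, 0), (Sum.inl 0, 1)}

lemma center_card (n : ℕ) : (center n).card = 2 := by
  rw [center, Finset.card_insert_of_notMem (by simp), Finset.card_singleton]

lemma center_dom (n : ℕ) : IsDomSet (bookGraph n) (center n) := by
  intro v hv
  obtain ⟨x, i⟩ := v
  cases x with
  | inl z =>
      exfalso; apply hv
    -- (inl z, i) with z : Fin 1 is in center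
      simp [center, Prod.ext_iff]
      fin_cases i <;> fin_cases z <;> simp
  | inr j =>
      refine ⟨(Sum.inl 0, i), by simp [center]; fin_cases i <;> simp, ?_⟩
      rw [bookGraph_adj]; left; exact ⟨Or.inl ⟨rfl, rfl⟩, rfl⟩

-- key: dominating 2-set must be the center, n ≥ 3
lemma dom_two_eq_center {n : ℕ} (hn : 3 ≤ n) {D : Finset (BV n)}
    (hD : IsDomSet (bookGraph n) D) (hc : D.card = 2) : D = center n := by
  have key : ∀ i : Fin 2, (Sum.inl 0, i) ∈ D := by
    intro i
    by_contra hmem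
    -- for each j, some element of D has first coordinate inr j
    have choice : ∀ j : Fin n, ∃ w ∈ D, w.1 = Sum.inr j := by
      intro j
      by_cases h : (Sum.inr j, i) ∈ D
      · exact ⟨_, h, rfl⟩
      · obtain ⟨u, hu, hadj⟩ := hD (Sum.inr j, i) h
        rw [bookGraph_adj] at hadj
        rcases hadj with ⟨h1, h2⟩ | ⟨h1, h2⟩
        · rcases h1 with ⟨hl, _⟩ | ⟨_, hr⟩
          · exfalso
            obtain ⟨z, hz⟩ := Sum.isLeft_iff.mp hl
            have : u = (Sum.inl 0, i) := by
              obtain ⟨u1, u2⟩ := u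
              simp only at hz h2
              subst hz h2
              simp [Fin.eq_zero z]
            exact hmem (this ▸ hu)
          · simp at hr
        · exact ⟨u, hu, h2⟩
    choose f hf1 hf2 using choice
    have hinj : Function.Injective f := by
      intro a b hab
      have := (hf2 a).symm.trans (hab ▸ hf2 b)
      exact Sum.inr.inj this
    have : n ≤ D.card := by
      have := Finset.card_le_card_of_injOn (s := (Finset.univ : Finset (Fin n)))
        (t := D) f (fun j _ => hf1 j) hinj.injOn
      simpa using this
    omega
  have hsub : center n ⊆ D := by
    intro v hv
    simp [center] at hv
    rcases hv with h | h <;> (subst h; first | exact key 0 | exact key 1)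
  exact (Finset.eq_of_subset_of_card_le hsub (by rw [hc, center_card])).symm

lemma center_acc {n : ℕ} (hn : 3 ≤ n) : IsAccDomSet (bookGraph n) (center n) := by
  refine ⟨center_dom n, fun E hE hcard hdom => ?_⟩
  have := dom_two_eq_center hn hdom (by rw [hcard, center_card])
  subst this
  have h : ((Sum.inl 0 : Fin 1 ⊕ Fin n), (0 : Fin 2)) ∈ center n := by simp [center]
  exact hE _ h h

-- no small dominating set
lemma no_small_dom {n : ℕ} (hn : 3 ≤ n) {D : Finset (BV n)}
    (hD : IsDomSet (bookGraph n) D) : 2 ≤ D.card := by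
  by_contra h
  push_neg at h
  interval_cases hc : D.card
  · -- empty
    obtain ⟨u, hu, _⟩ := hD (Sum.inl 0, 0) (by simp [Finset.card_eq_zero.mp hc])
    simp [Finset.card_eq_zero.mp hc] at hu
  · obtain ⟨a, ha⟩ := Finset.card_eq_one.mp hc
    obtain ⟨x, i⟩ := a
    set i' : Fin 2 := ⟨1 - i.val, by omega⟩ with hi'
    have hne : i ≠ i' := by
      intro h
      have hilt : i.val < 2 := i.isLt
      have := congrArg Fin.val h
      simp only [hi'] at this
      omega
    cases x with
    | inl z =>
        have hk0 : (0 : ℕ) < n := by omega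
        obtain ⟨u, hu, hadj⟩ := hD (Sum.inr ⟨0, hk0⟩, i')
          (by simp [ha, Prod.ext_iff])
        rw [ha, Finset.mem_singleton] at hu
        subst hu
        rw [bookGraph_adj] at hadj
        rcases hadj with ⟨_, h2⟩ | ⟨_, h2⟩
        · exact hne h2
        · simp at h2
    | inr j =>
        have : Nontrivial (Fin n) := Fin.nontrivial_iff_two_le.mpr (by omega)
        obtain ⟨k, hk⟩ := exists_ne j
        obtain ⟨u, hu, hadj⟩ := hD (Sum.inr k, i)
          (by simp [ha, Prod.ext_iff]; intro h; exact absurd h hk)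
        rw [ha, Finset.mem_singleton] at hu
        subst hu
        rw [bookGraph_adj] at hadj
        rcases hadj with ⟨h1, _⟩ | ⟨h1, _⟩
        · simp at h1
        · exact h1 rfl

lemma acc4 : IsAccDomSet (bookGraph 2)
    ({(Sum.inl 0, 0), (Sum.inl 0, 1), (Sum.inr 0, 0), (Sum.inr 1, 1)} :
      Finset (BV 2)) := by decide

lemma no_small_acc2 : ∀ D : Finset (BV 2), D.card ≤ 3 →
    ¬ IsAccDomSet (bookGraph 2) D := by decide

/-- `γ_a(B_2) = 4`, and for every `n ≥ 3`, `γ(B_n) = γ_a(B_n) = 2`. -/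
theorem bookGraph_domination :
    accDomNum (bookGraph 2) = 4 ∧
    ∀ n : ℕ, 3 ≤ n → domNum (bookGraph n) = 2 ∧ accDomNum (bookGraph n) = 2 := by
  constructor
  · have hmem : (4 : ℕ) ∈ {k | ∃ D : Finset (BV 2),
        IsAccDomSet (bookGraph 2) D ∧ D.card = k} :=
      ⟨_, acc4, by decide⟩
    refine le_antisymm (Nat.sInf_le hmem) (le_csInf ⟨4, hmem⟩ ?_)
    rintro k ⟨D, hacc, rfl⟩
    by_contra h
    exact no_small_acc2 D (by omega) hacc
  · intro n hn
    constructor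
    · have hmem : (2 : ℕ) ∈ {k | ∃ D : Finset (BV n),
          IsDomSet (bookGraph n) D ∧ D.card = k} :=
        ⟨_, center_dom n, center_card n⟩
      refine le_antisymm (Nat.sInf_le hmem) (le_csInf ⟨2, hmem⟩ ?_)
      rintro k ⟨D, hD, rfl⟩
      exact no_small_dom hn hD
    · have hmem : (2 : ℕ) ∈ {k | ∃ D : Finset (BV n),
          IsAccDomSet (bookGraph n) D ∧ D.card = k} :=
        ⟨_, center_acc hn, center_card n⟩
      refine le_antisymm (Nat.sInf_le hmem) (le_csInf ⟨2, hmem⟩ ?_)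
      rintro k ⟨D, hD, rfl⟩
      exact no_small_dom hn hD.1
end

section
/- Let F_n be the friendship graph with n ≥ 2 triangles and central vertex v. For every integer i with 1 ≤ i ≤ n−1, the number of accurate dominating sets of F_n of cardinality i equals the binomial coefficient C(2n, i−1); moreover every accurate dominating set of F_n of cardinality i ≤ n−1 contains the central vertex v. -/
/-- The friendship graph `F_n`: `n` triangles sharing a common central vertex `none`;
the vertex `some (i, a)` is the `a`-th base vertex of the `i`-th triangle. -/
def friendshipGraph (n : ℕ) : SimpleGraph (Option (Fin n × Fin 2)) :=
  SimpleGraph.fromRel (fun x y =>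
    x = none ∨ ∃ (i : Fin n) (a b : Fin 2), x = some (i, a) ∧ y = some (i, b) ∧ a ≠ b)

lemma fg_adj_none {n : ℕ} (j : Fin n) (a : Fin 2) :
    (friendshipGraph n).Adj none (some (j, a)) := by
  rw [friendshipGraph, SimpleGraph.fromRel_adj]
  exact ⟨by simp, Or.inl (Or.inl rfl)⟩

lemma fg_adj_some {n : ℕ} {u : Option (Fin n × Fin 2)} {j : Fin n} {a : Fin 2}
    (h : (friendshipGraph n).Adj u (some (j, a))) :
    u = none ∨ ∃ b : Fin 2, u = some (j, b) := by
  rw [friendshipGraph, SimpleGraph.fromRel_adj] at h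
  obtain ⟨hne, h | h⟩ := h
  · rcases h with h | ⟨i, c, b, hu, he, hcb⟩
    · exact Or.inl h
    · right
      obtain ⟨hij, -⟩ : j = i ∧ a = b := by simpa using he
      exact ⟨c, by rw [hu, hij]⟩
  · rcases h with h | ⟨i, c, b, he, hu, hcb⟩
    · simp at h
    · right
      obtain ⟨hij, -⟩ : j = i ∧ a = c := by simpa using he
      exact ⟨b, by rw [hu, hij]⟩

lemma dom_card_ge {n : ℕ} {D : Finset (Option (Fin n × Fin 2))}
    (hD : IsDomSet (friendshipGraph n) D) (hnone : none ∉ D) : n ≤ D.card := by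
  have key : ∀ j : Fin n, ∃ a : Fin 2, some (j, a) ∈ D := by
    intro j
    by_cases h0 : some (j, (0 : Fin 2)) ∈ D
    · exact ⟨0, h0⟩
    · obtain ⟨u, huD, hadj⟩ := hD _ h0
      rcases fg_adj_some hadj with rfl | ⟨b, rfl⟩
      · exact absurd huD hnone
      · exact ⟨b, huD⟩
  choose f hf using key
  have h := Finset.card_le_card_of_injOn (s := (Finset.univ : Finset (Fin n)))
    (fun j => some (j, f j)) (fun j _ => hf j)
    (by intro x _ y _ h; simp only [Option.some.injEq, Prod.mk.injEq] at h; exact h.1)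
  simpa using h

lemma dom_of_none {n : ℕ} {D : Finset (Option (Fin n × Fin 2))} (h : none ∈ D) :
    IsDomSet (friendshipGraph n) D := by
  intro x hx
  match x with
  | none => exact absurd h hx
  | some (j, a) => exact ⟨none, h, fg_adj_none j a⟩

/-- For `n ≥ 2` and `1 ≤ i ≤ n - 1`, the number of accurate dominating sets of the
friendship graph `F_n` of cardinality `i` is `C(2n, i-1)`, and every accurate
dominating set of cardinality `i` contains the central vertex. -/
theorem friendship_numAccDomSets (n i : ℕ) (hn : 2 ≤ n) (h1 : 1 ≤ i) (h2 : i ≤ n - 1) :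
    numAccDomSets (friendshipGraph n) i = Nat.choose (2 * n) (i - 1) ∧
    ∀ D : Finset (Option (Fin n × Fin 2)),
      IsAccDomSet (friendshipGraph n) D → D.card = i → none ∈ D := by
  have hin : i < n := by omega
  have hmem : ∀ D : Finset (Option (Fin n × Fin 2)),
      IsAccDomSet (friendshipGraph n) D → D.card = i → none ∈ D := by
    intro D hD hcard
    by_contra hnone
    have := dom_card_ge hD.1 hnone
    omega
  refine ⟨?_, hmem⟩
  have hset : {D : Finset (Option (Fin n × Fin 2)) |
      IsAccDomSet (friendshipGraph n) D ∧ D.card = i}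
      = ↑((((Finset.univ : Finset (Option (Fin n × Fin 2))).erase none).powersetCard
          (i - 1)).image (insert none)) := by
    ext D
    simp only [Set.mem_setOf_eq, Finset.coe_image, Set.mem_image, Finset.mem_coe,
      Finset.mem_powersetCard]
    constructor
    · rintro ⟨hacc, hcard⟩
      have hn0 : none ∈ D := hmem D hacc hcard
      refine ⟨D.erase none, ⟨?_, ?_⟩, Finset.insert_erase hn0⟩
      · intro x hx
        exact Finset.mem_erase.mpr ⟨(Finset.mem_erase.mp hx).1, Finset.mem_univ x⟩
      · rw [Finset.card_erase_of_mem hn0, hcard]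
    · rintro ⟨T, ⟨hTsub, hTcard⟩, rfl⟩
      have hTnone : none ∉ T := fun h => (Finset.mem_erase.mp (hTsub h)).1 rfl
      have hcard : (insert none T).card = i := by
        rw [Finset.card_insert_of_notMem hTnone, hTcard]; omega
      refine ⟨⟨dom_of_none (Finset.mem_insert_self _ _), ?_⟩, hcard⟩
      intro E hE hEcard hEdom
      have hEnone : none ∉ E := fun h => hE none h (Finset.mem_insert_self _ _)
      have := dom_card_ge hEdom hEnone
      omega
  rw [numAccDomSets, hset, Set.ncard_coe_finset]
  rw [Finset.card_image_of_injOn, Finset.card_powersetCard]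
  · congr 1
    rw [Finset.card_erase_of_mem (Finset.mem_univ _), Finset.card_univ]
    simp [Fintype.card_option, Fintype.card_prod]
    omega
  · intro T1 h1 T2 h2 heq
    rw [Finset.mem_coe, Finset.mem_powersetCard] at h1 h2
    have hn1 : none ∉ T1 := fun h => (Finset.mem_erase.mp (h1.1 h)).1 rfl
    have hn2 : none ∉ T2 := fun h => (Finset.mem_erase.mp (h2.1 h)).1 rfl
    rw [← Finset.erase_insert hn1, ← Finset.erase_insert hn2, heq]
end

section
/- Let G be a finite simple graph of order n ≥ 1. Then the corona G ∘ K_1 satisfies γ(G ∘ K_1) = n and γ_a(G ∘ K_1) = n + 1. -/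
/-- The corona `G ∘ K_1`: for each vertex `v` of `G` (sitting as `Sum.inl v`) a new
pendant vertex `Sum.inr v` is attached. -/
def corona {V : Type*} (G : SimpleGraph V) : SimpleGraph (V ⊕ V) :=
  SimpleGraph.fromRel (fun x y =>
    (∃ u v : V, x = Sum.inl u ∧ y = Sum.inl v ∧ G.Adj u v) ∨
    (∃ v : V, x = Sum.inl v ∧ y = Sum.inr v))

lemma corona_adj_inr {V : Type*} (G : SimpleGraph V) (x : V ⊕ V) (v : V) :
    (corona G).Adj x (Sum.inr v) ↔ x = Sum.inl v := by
  simp only [corona, SimpleGraph.fromRel_adj]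
  constructor
  · rintro ⟨hne, (⟨u, w, hx, hy, _⟩ | ⟨w, hx, hy⟩) | (⟨u, w, hx, hy, _⟩ | ⟨w, hx, hy⟩)⟩
    · simp at hy
    · rw [Sum.inr.injEq] at hy; subst hy; exact hx
    · simp at hx
    · simp at hx
  · rintro rfl
    exact ⟨by simp, Or.inl (Or.inr ⟨v, rfl, rfl⟩)⟩

open Classical in
/-- lower bound: every dominating set of the corona has at least `card V` elements. -/
lemma corona_dom_lb {V : Type*} [Fintype V] (G : SimpleGraph V)
    (D : Finset (V ⊕ V)) (hD : IsDomSet (corona G) D) : Fintype.card V ≤ D.card := by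
  classical
  set f : V → V ⊕ V := fun v => if Sum.inl v ∈ D then Sum.inl v else Sum.inr v with hf
  have hfD : ∀ v : V, f v ∈ D := by
    intro v
    by_cases hv : Sum.inl v ∈ D
    · simp [hf, hv]
    · by_cases h2 : Sum.inr v ∈ D
      · simp [hf, hv, h2]
      · obtain ⟨u, hu, hadj⟩ := hD _ h2
        rw [corona_adj_inr] at hadj
        exact absurd (hadj ▸ hu) hv
  have hinj : Function.Injective f := by
    intro v w h
    simp only [hf] at h
    split_ifs at h <;> simp_all
  calc Fintype.card V = Finset.univ.card := (Finset.card_univ).symm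
    _ ≤ D.card := Finset.card_le_card_of_injOn f (fun a _ => hfD a)
      (fun a _ b _ h => hinj h)

/-- For a graph `G` of order `n ≥ 1`, the corona `G ∘ K_1` satisfies
`γ(G ∘ K_1) = n` and `γ_a(G ∘ K_1) = n + 1`. -/
theorem corona_domNum {V : Type*} [Fintype V] [Nonempty V] (G : SimpleGraph V) :
    domNum (corona G) = Fintype.card V ∧
    accDomNum (corona G) = Fintype.card V + 1 := by
  classical
  set n := Fintype.card V with hn
  -- D0 : the copy of V
  set D0 : Finset (V ⊕ V) := Finset.univ.image Sum.inl with hD0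
  have hD0card : D0.card = n := by
    rw [hD0, Finset.card_image_of_injective _ Sum.inl_injective, Finset.card_univ]
  have hD0dom : IsDomSet (corona G) D0 := by
    intro x hx
    rcases x with v | v
    · exact absurd (Finset.mem_image_of_mem _ (Finset.mem_univ v)) hx
    · exact ⟨Sum.inl v, Finset.mem_image_of_mem _ (Finset.mem_univ v),
        (corona_adj_inr G _ v).2 rfl⟩
  have h1 : domNum (corona G) = n := by
    apply le_antisymm
    · exact Nat.sInf_le ⟨D0, hD0dom, hD0card⟩
    · refine le_csInf ⟨n, ⟨D0, hD0dom, hD0card⟩⟩ ?_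
      rintro k ⟨D, hDdom, rfl⟩
      exact corona_dom_lb G D hDdom
  refine ⟨h1, ?_⟩
  -- accurate dominating set of size n+1
  obtain ⟨v0⟩ := ‹Nonempty V›
  set D1 : Finset (V ⊕ V) := insert (Sum.inr v0) D0 with hD1
  have hinr0 : (Sum.inr v0 : V ⊕ V) ∉ D0 := by simp [hD0]
  have hD1card : D1.card = n + 1 := by
    rw [hD1, Finset.card_insert_of_notMem hinr0, hD0card]
  have hD1acc : IsAccDomSet (corona G) D1 := by
    constructor
    · intro x hx
      have hx0 : x ∉ D0 := fun h => hx (Finset.mem_insert_of_mem h)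
      obtain ⟨u, hu, hadj⟩ := hD0dom x hx0
      exact ⟨u, Finset.mem_insert_of_mem hu, hadj⟩
    · intro E hEdisj hEcard hEdom
      have hEsub : E ⊆ (Finset.univ.erase v0).image Sum.inr := by
        intro x hx
        have hxD1 := hEdisj x hx
        rcases x with w | w
        · exact absurd (Finset.mem_insert_of_mem
            (Finset.mem_image_of_mem _ (Finset.mem_univ w))) hxD1
        · have hw : w ≠ v0 := by
            rintro rfl; exact hxD1 (Finset.mem_insert_self _ _)
          exact Finset.mem_image_of_mem _ (Finset.mem_erase.2 ⟨hw, Finset.mem_univ w⟩)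
      have hle : E.card ≤ n - 1 := by
        calc E.card ≤ ((Finset.univ.erase v0).image Sum.inr).card :=
              Finset.card_le_card hEsub
          _ = n - 1 := by
              rw [Finset.card_image_of_injective _ Sum.inr_injective,
                Finset.card_erase_of_mem (Finset.mem_univ v0), Finset.card_univ]
      omega
  apply le_antisymm
  · exact Nat.sInf_le ⟨D1, hD1acc, hD1card⟩
  · refine le_csInf ⟨n + 1, ⟨D1, hD1acc, hD1card⟩⟩ ?_
    rintro k ⟨D, ⟨hDdom, hDacc⟩, rfl⟩
    by_contra hlt
    push_neg at hlt
    have hge : n ≤ D.card := corona_dom_lb G D hDdom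
    have hcard : D.card = n := by omega
    -- D contains exactly one of inl v / inr v for each v
    set f : V → V ⊕ V := fun v => if Sum.inl v ∈ D then Sum.inl v else Sum.inr v with hf
    have hfD : ∀ v : V, f v ∈ D := by
      intro v
      by_cases hv : Sum.inl v ∈ D
      · simp [hf, hv]
      · by_cases h2 : Sum.inr v ∈ D
        · simp [hf, hv, h2]
        · obtain ⟨u, hu, hadj⟩ := hDdom _ h2
          rw [corona_adj_inr] at hadj
          exact absurd (hadj ▸ hu) hv
    have hfinj : Function.Injective f := by
      intro v w h
      simp only [hf] at h
      split_ifs at h <;> simp_all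
    have himg : Finset.univ.image f = D := by
      apply Finset.eq_of_subset_of_card_le
      · intro x hx
        obtain ⟨v, _, rfl⟩ := Finset.mem_image.1 hx
        exact hfD v
      · rw [Finset.card_image_of_injective _ hfinj, Finset.card_univ, hcard]
    have hone : ∀ v : V, Sum.inl v ∈ D ↔ Sum.inr v ∉ D := by
      intro v
      constructor
      · intro hv hv2
        have : (Sum.inr v : V ⊕ V) ∈ Finset.univ.image f := himg ▸ hv2
        obtain ⟨w, -, hw⟩ := Finset.mem_image.1 this
        by_cases h : Sum.inl w ∈ D
        · simp only [hf, if_pos h] at hw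
          exact absurd hw (by simp)
        · simp only [hf, if_neg h] at hw
          rw [Sum.inr.injEq] at hw
          exact h (by rw [hw]; exact hv)
      · intro hv
        by_contra h
        have := hfD v
        simp only [hf, if_neg h] at this
        exact hv this
    -- the swap set E
    set g : V → V ⊕ V := fun v => if Sum.inl v ∈ D then Sum.inr v else Sum.inl v with hg
    have hginj : Function.Injective g := by
      intro v w h
      simp only [hg] at h
      split_ifs at h <;> simp_all
    set E : Finset (V ⊕ V) := Finset.univ.image g with hE
    have hEdisj : ∀ x ∈ E, x ∉ D := by
      intro x hx
      obtain ⟨v, _, rfl⟩ := Finset.mem_image.1 hx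
      by_cases hv : Sum.inl v ∈ D
      · simp only [hg, if_pos hv]
        exact (hone v).1 hv
      · simp only [hg, if_neg hv]
        exact hv
    have hEcard : E.card = D.card := by
      rw [hE, Finset.card_image_of_injective _ hginj, Finset.card_univ, hcard]
    have hEdom : IsDomSet (corona G) E := by
      intro x hx
      rcases x with v | v
      · have hv : Sum.inl v ∈ D := by
          by_contra h
          have hgv : g v = Sum.inl v := by simp [hg, h]
          exact hx (hgv ▸ Finset.mem_image_of_mem g (Finset.mem_univ v))
        refine ⟨Sum.inr v, ?_, ?_⟩
        · have hgv : g v = Sum.inr v := by simp [hg, hv]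
          exact hgv ▸ Finset.mem_image_of_mem g (Finset.mem_univ v)
        · exact ((corona_adj_inr G _ v).2 rfl).symm
      · have hv : Sum.inl v ∉ D := by
          intro h
          have : g v = Sum.inr v := by simp [hg, h]
          exact hx (this ▸ Finset.mem_image_of_mem g (Finset.mem_univ v))
        refine ⟨Sum.inl v, ?_, (corona_adj_inr G _ v).2 rfl⟩
        have : g v = Sum.inl v := by simp [hg, hv]
        exact this ▸ Finset.mem_image_of_mem g (Finset.mem_univ v)
    exact hDacc E hEdisj hEcard hEdom
end

section
/- Let n ≥ 6 and let i be an integer with ⌈n/3⌉ ≤ i ≤ ⌊n/2⌋. Then the number of accurate dominating sets of the path P_n of cardinality i satisfies d_a(P_n, i) ≥ Σ_{k=3}^{i} d(P_{n−k}, i−k+1) + Σ_{k=5}^{i+1} d(P_{n−k}, i−k+2) (a sum over an empty index range is 0). -/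
open Finset SimpleGraph

theorem IsDomSet.isAccDomSet_of_adj_subset {V : Type*} {G : SimpleGraph V} {D : Finset V}
    (hD : IsDomSet G D) {w : V} (hw : w ∈ D) (hadj : ∀ u, G.Adj u w → u ∈ D) :
    IsAccDomSet G D := by
  refine ⟨hD, fun E hE _ hE_dom => ?_⟩
  by_cases hwE : w ∈ E
  · exact hE w hwE hw
  · obtain ⟨u, hu, huw⟩ := hE_dom w hwE
    exact hE u hu (hadj u huw)

section Counting

variable {V : Type*} [Fintype V]

open Classical in
noncomputable def domSetsOfCard (G : SimpleGraph V) (j : ℕ) : Finset (Finset V) :=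
  univ.filter fun D => IsDomSet G D ∧ D.card = j

open Classical in
noncomputable def accDomSetsOfCard (G : SimpleGraph V) (j : ℕ) : Finset (Finset V) :=
  univ.filter fun D => IsAccDomSet G D ∧ D.card = j

theorem mem_domSetsOfCard {G : SimpleGraph V} {j : ℕ} {D : Finset V} :
    D ∈ domSetsOfCard G j ↔ IsDomSet G D ∧ D.card = j := by
  simp [domSetsOfCard]

theorem mem_accDomSetsOfCard {G : SimpleGraph V} {j : ℕ} {D : Finset V} :
    D ∈ accDomSetsOfCard G j ↔ IsAccDomSet G D ∧ D.card = j := by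
  simp [accDomSetsOfCard]

theorem card_domSetsOfCard (G : SimpleGraph V) (j : ℕ) :
    (domSetsOfCard G j).card = numDomSets G j := by
  rw [numDomSets, ← Set.ncard_coe_finset]
  congr
  ext D
  exact mem_domSetsOfCard

theorem card_accDomSetsOfCard (G : SimpleGraph V) (j : ℕ) :
    (accDomSetsOfCard G j).card = numAccDomSets G j := by
  rw [numAccDomSets, ← Set.ncard_coe_finset]
  congr
  ext D
  exact mem_accDomSetsOfCard

end Counting

def shiftEmb (n k : ℕ) : Fin (n - k) ↪ Fin n :=
  ⟨fun v => ⟨v + k, by omega⟩, fun u v h => by simpa [Fin.ext_iff] using h⟩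

@[simp]
theorem val_shiftEmb {n k : ℕ} (v : Fin (n - k)) : (shiftEmb n k v : ℕ) = v + k := rfl

/-- The set `{a, …, k-2} ∪ (D' + k)` in `P_n`. -/
def prependBlock (n a k : ℕ) (D' : Finset (Fin (n - k))) : Finset (Fin n) :=
  ((Ico a (k - 1)).filter (· < n)).attachFin (fun _ hm => (mem_filter.mp hm).2) ∪
    D'.map (shiftEmb n k)

section PrependBlock

variable {n a k : ℕ} {D' : Finset (Fin (n - k))}

theorem mem_prependBlock {v : Fin n} :
    v ∈ prependBlock n a k D' ↔ (a ≤ v ∧ v < k - 1) ∨ ∃ x ∈ D', (x : ℕ) + k = v := by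
  simp [prependBlock, mem_attachFin, Fin.ext_iff]

theorem card_prependBlock (hkn : k ≤ n) :
    (prependBlock n a k D').card = (k - 1 - a) + D'.card := by
  rw [prependBlock, card_union_of_disjoint, card_attachFin, card_map,
    filter_true_of_mem fun m hm => by rw [mem_Ico] at hm; omega, Nat.card_Ico]
  refine Finset.disjoint_left.mpr fun v hv hv' => ?_
  rw [mem_attachFin, mem_filter, mem_Ico] at hv
  obtain ⟨x, -, rfl⟩ := mem_map.mp hv'
  rw [val_shiftEmb] at hv
  omega

theorem prependBlock_injective : Function.Injective (prependBlock n a k) := by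
  intro D₁ D₂ h
  have key : ∀ x : Fin (n - k), x ∈ D₁ ↔ x ∈ D₂ := fun x => by
    have hx := congrArg (shiftEmb n k x ∈ ·) h
    have hblock : ¬ (x : ℕ) + k < k - 1 := by omega
    simpa [mem_prependBlock, hblock, ← Fin.ext_iff] using hx
  exact ext key

/-- The block ending at `k - 2` omits `k - 1`, which every longer block contains. -/
theorem prependBlock_ne_of_lt {k' : ℕ} (hak : a < k) (hkk' : k < k') (hkn : k ≤ n)
    {D₂ : Finset (Fin (n - k'))} : prependBlock n a k D' ≠ prependBlock n a k' D₂ := by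
  intro h
  have hmem : (⟨k - 1, by omega⟩ : Fin n) ∈ prependBlock n a k' D₂ :=
    mem_prependBlock.mpr (.inl ⟨by simp only; omega, by simp only; omega⟩)
  rw [← h, mem_prependBlock] at hmem
  rcases hmem with ⟨-, h'⟩ | ⟨x, -, hx⟩ <;> simp only at * <;> omega

theorem prependBlock_zero_ne_one {k' : ℕ} (hk : 2 ≤ k) (hkn : k ≤ n) (hk' : 1 ≤ k')
    {D₂ : Finset (Fin (n - k'))} : prependBlock n 0 k D' ≠ prependBlock n 1 k' D₂ := by
  intro h
  have hmem : (⟨0, by omega⟩ : Fin n) ∈ prependBlock n 0 k D' :=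
    mem_prependBlock.mpr (.inl ⟨le_rfl, by simp only; omega⟩)
  rw [h, mem_prependBlock] at hmem
  rcases hmem with ⟨h', -⟩ | ⟨x, -, hx⟩ <;> simp only at * <;> omega

theorem isDomSet_prependBlock (ha : a ≤ 1) (hk : a + 2 ≤ k) (hkn : k ≤ n)
    (hD' : IsDomSet (pathGraph (n - k)) D') : IsDomSet (pathGraph n) (prependBlock n a k D') := by
  intro v hv
  rw [mem_prependBlock, not_or, not_and_or, not_le, not_lt] at hv
  obtain ⟨hv_block, hv_shift⟩ := hv
  by_cases hvk : (v : ℕ) < k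
  · -- `v` is `0` (then `a = 1`) or `k - 1`: dominated by the block
    refine ⟨⟨if (v : ℕ) = 0 then 1 else k - 2, by split_ifs <;> omega⟩, ?_, ?_⟩
    · exact mem_prependBlock.mpr (.inl (by split_ifs <;> simp only <;> omega))
    · rw [pathGraph_adj]; split_ifs <;> simp only <;> omega
  · have hx : (⟨v - k, by omega⟩ : Fin (n - k)) ∉ D' := fun hx =>
      hv_shift ⟨_, hx, by simp only; omega⟩
    obtain ⟨u, hu, hadj⟩ := hD' _ hx
    rw [pathGraph_adj] at hadj
    refine ⟨shiftEmb n k u, mem_prependBlock.mpr (.inr ⟨u, hu, rfl⟩), ?_⟩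
    rw [pathGraph_adj, val_shiftEmb]
    simp only at hadj
    omega

/-- The closed neighbourhood of `2 * a` lies in the block. -/
theorem isAccDomSet_prependBlock (ha : a ≤ 1) (hk : 2 * a + 3 ≤ k) (hkn : k ≤ n)
    (hD' : IsDomSet (pathGraph (n - k)) D') :
    IsAccDomSet (pathGraph n) (prependBlock n a k D') := by
  have hw : (⟨2 * a, by omega⟩ : Fin n) ∈ prependBlock n a k D' :=
    mem_prependBlock.mpr (.inl ⟨by simp only; omega, by simp only; omega⟩)
  refine (isDomSet_prependBlock ha (by omega) hkn hD').isAccDomSet_of_adj_subset hw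
    fun u hu => mem_prependBlock.mpr (.inl ?_)
  rw [pathGraph_adj] at hu
  simp only at hu
  omega

end PrependBlock

theorem lt_of_card_pos_fin_sub {m k : ℕ} (D : Finset (Fin (m - k))) (hD : 0 < D.card) :
    k < m := by
  obtain ⟨x, -⟩ := card_pos.mp hD
  have := x.isLt
  omega

noncomputable def prependFamily (n i a : ℕ) : Finset (Finset (Fin n)) :=
  (Icc (2 * a + 3) (i + a)).biUnion fun k =>
    (domSetsOfCard (pathGraph (n - k)) (i + 1 + a - k)).image (prependBlock n a k)

section PrependFamily

variable {n i a : ℕ}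

theorem exists_of_mem_prependFamily {X : Finset (Fin n)} (hX : X ∈ prependFamily n i a) :
    ∃ k, 2 * a + 3 ≤ k ∧ k ≤ i + a ∧ k < n ∧ ∃ D' : Finset (Fin (n - k)),
      IsDomSet (pathGraph (n - k)) D' ∧ D'.card = i + 1 + a - k ∧ prependBlock n a k D' = X := by
  simp only [prependFamily, mem_biUnion, mem_Icc, mem_image, mem_domSetsOfCard] at hX
  obtain ⟨k, ⟨hk, hki⟩, D', ⟨hD', hcard⟩, rfl⟩ := hX
  exact ⟨k, hk, hki, lt_of_card_pos_fin_sub D' (by omega), D', hD', hcard, rfl⟩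

theorem prependFamily_subset (ha : a ≤ 1) :
    prependFamily n i a ⊆ accDomSetsOfCard (pathGraph n) i := by
  intro X hX
  obtain ⟨k, hk, hki, hkn, D', hD', hcard, rfl⟩ := exists_of_mem_prependFamily hX
  rw [mem_accDomSetsOfCard, card_prependBlock hkn.le, hcard]
  exact ⟨isAccDomSet_prependBlock ha hk hkn.le hD', by omega⟩

theorem card_prependFamily :
    (prependFamily n i a).card =
      ∑ k ∈ Icc (2 * a + 3) (i + a), numDomSets (pathGraph (n - k)) (i + 1 + a - k) := by
  have hdisj : (Icc (2 * a + 3) (i + a) : Set ℕ).PairwiseDisjoint fun k =>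
      (domSetsOfCard (pathGraph (n - k)) (i + 1 + a - k)).image (prependBlock n a k) := by
    intro k hk k' hk' hne
    refine Finset.disjoint_left.mpr fun X hX hX' => ?_
    simp only [coe_Icc, Set.mem_Icc, mem_image, mem_domSetsOfCard] at hk hk' hX hX'
    obtain ⟨D₁, ⟨-, hcard₁⟩, rfl⟩ := hX
    obtain ⟨D₂, ⟨-, hcard₂⟩, hX⟩ := hX'
    have hkn := lt_of_card_pos_fin_sub D₁ (by omega)
    have hk'n := lt_of_card_pos_fin_sub D₂ (by omega)
    rcases Nat.lt_or_gt_of_ne hne with hlt | hlt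
    · exact prependBlock_ne_of_lt (by omega) hlt (by omega) hX.symm
    · exact prependBlock_ne_of_lt (by omega) hlt (by omega) hX
  unfold prependFamily
  rw [card_biUnion hdisj]
  refine sum_congr rfl fun k _ => ?_
  rw [card_image_of_injective _ prependBlock_injective, card_domSetsOfCard]

theorem disjoint_prependFamily_zero_one :
    Disjoint (prependFamily n i 0) (prependFamily n i 1) := by
  refine Finset.disjoint_left.mpr fun X hX₀ hX₁ => ?_
  obtain ⟨k, hk, -, hkn, D₁, -, -, rfl⟩ := exists_of_mem_prependFamily hX₀
  obtain ⟨k', hk', -, -, D₂, -, -, hX⟩ := exists_of_mem_prependFamily hX₁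
  exact prependBlock_zero_ne_one (by omega) hkn.le (by omega) hX.symm

end PrependFamily

theorem path_numAccDomSets_lower_general (n i : ℕ) :
    (∑ k ∈ Finset.Icc 3 i, numDomSets (SimpleGraph.pathGraph (n - k)) (i + 1 - k)) +
      (∑ k ∈ Finset.Icc 5 (i + 1), numDomSets (SimpleGraph.pathGraph (n - k)) (i + 2 - k)) ≤
    numAccDomSets (SimpleGraph.pathGraph n) i := by
  calc _ = (prependFamily n i 0).card + (prependFamily n i 1).card := by
        rw [card_prependFamily, card_prependFamily]; rfl
    _ = (prependFamily n i 0 ∪ prependFamily n i 1).card :=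
        (card_union_of_disjoint disjoint_prependFamily_zero_one).symm
    _ ≤ (accDomSetsOfCard (pathGraph n) i).card :=
        card_le_card (union_subset (prependFamily_subset zero_le_one) (prependFamily_subset le_rfl))
    _ = numAccDomSets (pathGraph n) i := card_accDomSetsOfCard _ _

/-- Lower bound for the number of accurate dominating sets of the path `P_n` of
cardinality `i`, for `⌈n/3⌉ ≤ i ≤ ⌊n/2⌋`. -/
theorem path_numAccDomSets_lower (n i : ℕ) (hn : 6 ≤ n)
    (h1 : (n + 2) / 3 ≤ i) (h2 : i ≤ n / 2) :
    (∑ k ∈ Finset.Icc 3 i, numDomSets (SimpleGraph.pathGraph (n - k)) (i + 1 - k)) +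
      (∑ k ∈ Finset.Icc 5 (i + 1), numDomSets (SimpleGraph.pathGraph (n - k)) (i + 2 - k)) ≤
    numAccDomSets (SimpleGraph.pathGraph n) i :=
  path_numAccDomSets_lower_general n i
end

section
/- Let n ≥ 6 and let i be an integer with ⌈n/3⌉ ≤ i ≤ ⌊n/2⌋. Then the number of accurate dominating sets of the path P_n of cardinality i satisfies d_a(P_n, i) ≤ d_a(P_{n−2}, i−1) + d_a(P_{n−3}, i−1) + d_a(P_{n−4}, i−2) + Σ_{k=3}^{i} d(P_{n−k}, i−k+1) + Σ_{k=5}^{i+1} d(P_{n−k}, i−k+2) (a sum over an empty index range is 0). -/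
/-! Label the vertices of `P_n` by `0, …, n - 1`. An accurate dominating set `D` with `i ≤ n / 2`
elements starts with a block `[a, b)`, `a ≤ 1`, followed by the gap `b`, and it is recovered from
this prefix and its shift `{v | v + b + 1 ∈ D}`, which dominates `P_{n-b-1}`. Long blocks give the
two sums. For the prefixes `{0}`, `{1}` and `{1, 2}` the shift is even accurate: a witness against
it, lifted back and completed below the cut by a few vertices outside `D`, would be a witness
against `D`. For the prefix `{1}` this is used to shift by `3` when that shift is accurate and by
`2` otherwise; those shifts by `2` never collide with the shifts of the sets with prefix `{0}`. -/

open Finset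

/-- Domination in `SimpleGraph.pathGraph n`, transported along `Fin.val` to subsets of `range n`. -/
def IsPathDomSet (n : ℕ) (D : Finset ℕ) : Prop :=
  D ⊆ range n ∧ ∀ v < n, v ∉ D → ∃ u ∈ D, u + 1 = v ∨ v + 1 = u

def IsPathAccDomSet (n : ℕ) (D : Finset ℕ) : Prop :=
  IsPathDomSet n D ∧ ∀ E : Finset ℕ, Disjoint E D → E.card = D.card → ¬ IsPathDomSet n E

def pathDomSets (n i : ℕ) : Set (Finset ℕ) := {D | IsPathDomSet n D ∧ D.card = i}

def pathAccDomSets (n i : ℕ) : Set (Finset ℕ) := {D | IsPathAccDomSet n D ∧ D.card = i}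

noncomputable def shiftDown (k : ℕ) (D : Finset ℕ) : Finset ℕ :=
  D.preimage (· + k) (add_left_injective k).injOn

def shiftUp (k : ℕ) (F : Finset ℕ) : Finset ℕ := F.map (addRightEmbedding k)

section Shift

variable {k v : ℕ} {D F : Finset ℕ}

@[simp]
lemma mem_shiftDown : v ∈ shiftDown k D ↔ v + k ∈ D := mem_preimage

@[simp]
lemma mem_shiftUp : v ∈ shiftUp k F ↔ k ≤ v ∧ v - k ∈ F := by
  simp only [shiftUp, mem_map, addRightEmbedding_apply]
  constructor
  · rintro ⟨u, hu, rfl⟩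
    simpa using hu
  · rintro ⟨hkv, hv⟩
    exact ⟨v - k, hv, Nat.sub_add_cancel hkv⟩

lemma card_shiftUp : (shiftUp k F).card = F.card := card_map _

lemma shiftDown_shiftDown (a b : ℕ) : shiftDown a (shiftDown b D) = shiftDown (a + b) D := by
  ext v
  simp [add_assoc]

lemma card_shiftDown_add_card_filter_lt :
    (shiftDown k D).card + (D.filter (· < k)).card = D.card := by
  have h : shiftUp k (shiftDown k D) = D.filter (fun v => ¬ v < k) := by
    ext v
    simp only [mem_shiftUp, mem_shiftDown, mem_filter, not_lt]
    constructor
    · rintro ⟨hkv, hv⟩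
      exact ⟨by rwa [Nat.sub_add_cancel hkv] at hv, hkv⟩
    · rintro ⟨hv, hkv⟩
      exact ⟨hkv, by rwa [Nat.sub_add_cancel hkv]⟩
  rw [← card_shiftUp, h, add_comm]
  exact card_filter_add_card_filter_not _

lemma disjoint_shiftUp_of_disjoint_shiftDown (h : Disjoint F (shiftDown k D)) :
    Disjoint (shiftUp k F) D := by
  rw [disjoint_left] at h ⊢
  intro v hv hvD
  rw [mem_shiftUp] at hv
  exact h hv.2 (by rwa [mem_shiftDown, Nat.sub_add_cancel hv.1])

lemma injOn_shiftDown {m : ℕ} (hkm : k ≤ m) (L : Finset ℕ) :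
    Set.InjOn (shiftDown k) {D | D.filter (· < m) = L} := by
  intro D₁ h₁ D₂ h₂ heq
  ext v
  by_cases hv : v < k
  · have := congrArg (v ∈ ·) (h₁.trans h₂.symm)
    simpa [hv.trans_le hkm] using this
  · have := congrArg (v - k ∈ ·) heq
    simpa [Nat.sub_add_cancel (not_lt.1 hv)] using this

end Shift

namespace IsPathDomSet

variable {n k : ℕ} {D F X : Finset ℕ}

lemma shiftDown (hD : IsPathDomSet n D) (hk : k - 1 ∉ D ∨ k + 1 ∈ D) :
    IsPathDomSet (n - k) (shiftDown k D) := by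
  refine ⟨fun v hv => ?_, fun v hv hvD => ?_⟩
  · have := mem_range.1 (hD.1 (mem_shiftDown.1 hv))
    exact mem_range.2 (by omega)
  · rw [mem_shiftDown] at hvD
    obtain ⟨u, huD, hu⟩ := hD.2 (v + k) (by omega) hvD
    by_cases hku : k ≤ u
    · exact ⟨u - k, by rwa [mem_shiftDown, Nat.sub_add_cancel hku], by omega⟩
    · -- `k` is dominated from below the cut, by `k - 1`, so `hk` puts `k + 1` into `D`
      have hv0 : v = 0 := by omega
      have hu' : u = k - 1 := by omega
      subst hv0 hu'
      exact ⟨1, by simpa [add_comm] using hk.resolve_left (not_not.2 huD), by omega⟩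

lemma union_shiftUp (hF : IsPathDomSet (n - k) F) (hk : k ≤ n) (hX : X ⊆ range k)
    (hlow : ∀ v < k, v ∉ X → ∃ u ∈ X ∪ shiftUp k F, u + 1 = v ∨ v + 1 = u) :
    IsPathDomSet n (X ∪ shiftUp k F) := by
  refine ⟨union_subset (hX.trans (range_subset_range.2 hk)) fun v hv => ?_, fun v hv hvD => ?_⟩
  · rw [mem_shiftUp] at hv
    have := mem_range.1 (hF.1 hv.2)
    exact mem_range.2 (by omega)
  · by_cases hvk : v < k
    · exact hlow v hvk (fun h => hvD (mem_union_left _ h))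
    · have hvF : v - k ∉ F := fun h => hvD (mem_union_right _ (mem_shiftUp.2 ⟨by omega, h⟩))
      obtain ⟨u, huF, hu⟩ := hF.2 (v - k) (by omega) hvF
      exact ⟨u + k, mem_union_right _ (by simpa using huF), by omega⟩

lemma zero_mem_or_one_mem (hD : IsPathDomSet n D) (hn : 0 < n) : 0 ∈ D ∨ 1 ∈ D := by
  by_contra! h
  obtain ⟨u, huD, hu⟩ := hD.2 0 hn h.1
  obtain rfl : u = 1 := by omega
  exact h.2 huD

lemma exists_filter_lt_eq_Ico (hD : IsPathDomSet n D) (hn : D.card + 2 < n) :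
    ∃ a ≤ 1, ∃ b, a < b ∧ b < a + D.card ∧ D.filter (· < b + 1) = Ico a b := by
  obtain ⟨a, ha1, haD, hbelow⟩ : ∃ a ≤ 1, a ∈ D ∧ ∀ v < a, v ∉ D := by
    rcases hD.zero_mem_or_one_mem (by omega) with h0 | h1
    · exact ⟨0, by omega, h0, by omega⟩
    · by_cases h0 : 0 ∈ D
      · exact ⟨0, by omega, h0, by omega⟩
      · exact ⟨1, le_rfl, h1, fun v hv => by rwa [Nat.lt_one_iff.1 hv]⟩
  have hex : ∃ b, a ≤ b ∧ b ∉ D :=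
    ⟨n, by omega, fun h => (lt_irrefl n) (mem_range.1 (hD.1 h))⟩
  set b := Nat.find hex
  obtain ⟨hab, hbD⟩ : a ≤ b ∧ b ∉ D := Nat.find_spec hex
  have hIco : Ico a b ⊆ D := fun v hv => by
    obtain ⟨hav, hvb⟩ := mem_Ico.1 hv
    by_contra hvD
    exact Nat.find_min hex hvb ⟨hav, hvD⟩
  have hfilter : D.filter (· < b + 1) = Ico a b := by
    ext v
    simp only [mem_filter, mem_Ico]
    constructor
    · rintro ⟨hvD, hvb⟩
      refine ⟨not_lt.1 fun hva => hbelow v hva hvD, lt_of_le_of_ne (by omega) ?_⟩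
      rintro rfl
      exact hbD hvD
    · intro hv
      exact ⟨hIco (mem_Ico.2 hv), by omega⟩
  have hcard : b - a ≤ D.card := by simpa using card_le_card hIco
  refine ⟨a, ha1, b, lt_of_le_of_ne hab fun h => hbD (h ▸ haD), ?_, hfilter⟩
  -- if the block were all of `D`, the vertex `b + 1` would be undominated
  refine lt_of_le_of_ne (by omega) fun hb => ?_
  have hDeq : Ico a b = D := eq_of_subset_of_card_le hIco (by simp; omega)
  obtain ⟨u, huD, hu⟩ := hD.2 (b + 1) (by omega) (by rw [← hDeq]; simp)
  rw [← hDeq, mem_Ico] at huD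
  omega

lemma exists_disjoint_of_not_isPathAccDomSet (hD : IsPathDomSet n D)
    (h : ¬ IsPathAccDomSet n D) : ∃ E, Disjoint E D ∧ E.card = D.card ∧ IsPathDomSet n E := by
  simpa [IsPathAccDomSet, hD] using h

end IsPathDomSet

namespace IsPathAccDomSet

variable {n k : ℕ} {D F X : Finset ℕ}

lemma not_isPathDomSet_of_lift (hD : IsPathAccDomSet n D) (hk : k ≤ n) (hX : X ⊆ range k)
    (hXD : Disjoint X D) (hFD : Disjoint F (shiftDown k D)) (hcard : X.card + F.card = D.card)
    (hlow : ∀ v < k, v ∉ X → ∃ u ∈ X ∪ shiftUp k F, u + 1 = v ∨ v + 1 = u) :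
    ¬ IsPathDomSet (n - k) F := fun hF => by
  have hXF : Disjoint X (shiftUp k F) := disjoint_left.2 fun v hvX hvF =>
    (mem_range.1 (hX hvX)).not_ge (mem_shiftUp.1 hvF).1
  refine hD.2 _ (disjoint_union_left.2 ⟨hXD, disjoint_shiftUp_of_disjoint_shiftDown hFD⟩) ?_
    (hF.union_shiftUp hk hX hlow)
  rw [card_union_of_disjoint hXF, card_shiftUp, hcard]

lemma shiftDown (hD : IsPathAccDomSet n D) (hk : k ≤ n) (hkD : k - 1 ∉ D ∨ k + 1 ∈ D)
    (hX : X ⊆ range k) (hXD : Disjoint X D) (hXcard : X.card = (D.filter (· < k)).card)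
    (hlow : ∀ v < k, v ∉ X → ∃ u ∈ X, u + 1 = v ∨ v + 1 = u) :
    IsPathAccDomSet (n - k) (shiftDown k D) := by
  refine ⟨hD.1.shiftDown hkD, fun F hFD hcard => hD.not_isPathDomSet_of_lift hk hX hXD hFD ?_ ?_⟩
  · rw [hcard, hXcard, add_comm, card_shiftDown_add_card_filter_lt]
  · intro v hv hvX
    obtain ⟨u, hu, huv⟩ := hlow v hv hvX
    exact ⟨u, mem_union_left _ hu, huv⟩

end IsPathAccDomSet

lemma finite_pathDomSets (n i : ℕ) : (pathDomSets n i).Finite :=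
  (range n).powerset.finite_toSet.subset fun _ hD => mem_powerset.2 hD.1.1

lemma finite_pathAccDomSets (n i : ℕ) : (pathAccDomSets n i).Finite :=
  (finite_pathDomSets n i).subset fun _ hD => ⟨hD.1.1, hD.2⟩

def accPrefixSets (n i k : ℕ) (L : Finset ℕ) : Set (Finset ℕ) :=
  {D | D ∈ pathAccDomSets n i ∧ D.filter (· < k) = L}

section Families

variable {n i k : ℕ} {D : Finset ℕ} {L : Finset ℕ}

lemma mem_iff_of_filter_lt_eq (hL : D.filter (· < k) = L) {v : ℕ} (hv : v < k) :
    v ∈ D ↔ v ∈ L := by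
  simp [← hL, hv]

lemma card_shiftDown_of_filter_lt_eq (hD : D.card = i) (hL : D.filter (· < k) = L) :
    (shiftDown k D).card = i - L.card := by
  have := card_shiftDown_add_card_filter_lt (k := k) (D := D)
  rw [hL] at this
  omega

lemma shiftDown_mem_pathDomSets (hD : D ∈ pathDomSets n i) (hL : D.filter (· < k) = L)
    (hk : k - 1 ∉ D) : shiftDown k D ∈ pathDomSets (n - k) (i - L.card) :=
  ⟨hD.1.shiftDown (Or.inl hk), card_shiftDown_of_filter_lt_eq hD.2 hL⟩

lemma shiftDown_mem_of_prefix_zero (hn : 2 ≤ n) (hD : D ∈ accPrefixSets n i 2 {0}) :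
    shiftDown 2 D ∈ pathAccDomSets (n - 2) (i - 1) := by
  obtain ⟨⟨hacc, hcard⟩, hL⟩ := hD
  have h1 : 1 ∉ D := by simp [mem_iff_of_filter_lt_eq hL]
  refine ⟨hacc.shiftDown (X := {1}) hn (Or.inl h1) (by simp) (by simpa using h1)
    (by rw [hL, card_singleton, card_singleton]) ?_, card_shiftDown_of_filter_lt_eq hcard hL⟩
  intro v hv hvX
  interval_cases v <;> simp_all

/-- Otherwise `4 ∈ D`, so a witness against the shift contains `0`, and adding the vertex `0` to
its lift gives a witness against `D`. -/
lemma three_mem_of_not_isPathAccDomSet (hn : 4 ≤ n) (hD : D ∈ accPrefixSets n i 3 {1})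
    (hnacc : ¬ IsPathAccDomSet (n - 3) (shiftDown 3 D)) : 3 ∈ D := by
  obtain ⟨⟨hacc, hcard⟩, hL⟩ := hD
  have h0 : 0 ∉ D := by simp [mem_iff_of_filter_lt_eq hL]
  have h2 : 2 ∉ D := by simp [mem_iff_of_filter_lt_eq hL]
  by_contra h3
  have h4 : 4 ∈ D := by
    obtain ⟨u, huD, hu⟩ := hacc.1.2 3 (by omega) h3
    obtain rfl | rfl : u = 2 ∨ u = 4 := by omega
    exacts [absurd huD h2, huD]
  obtain ⟨E, hED, hEcard, hE⟩ :=
    (hacc.1.shiftDown (Or.inl h2)).exists_disjoint_of_not_isPathAccDomSet hnacc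
  have h0E : 0 ∈ E := by
    refine (hE.zero_mem_or_one_mem (by omega)).resolve_right fun h1E => ?_
    exact disjoint_left.1 hED h1E (by simpa using h4)
  refine hacc.not_isPathDomSet_of_lift (X := {0}) (by omega) (by simp) (by simpa using h0) hED
    ?_ ?_ hE
  · rw [hEcard, card_shiftDown_of_filter_lt_eq hcard hL]
    simp only [card_singleton]
    have : 0 < i := hcard ▸ card_pos.2 ⟨_, h4⟩
    omega
  · intro v hv hvX
    interval_cases v
    · simp at hvX
    · exact ⟨0, by simp, by omega⟩
    · exact ⟨3, by simp [h0E], by omega⟩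

lemma shiftDown_two_mem_of_prefix_one (hn : 2 ≤ n) (hD : D ∈ accPrefixSets n i 3 {1})
    (h3 : 3 ∈ D) : shiftDown 2 D ∈ pathAccDomSets (n - 2) (i - 1) := by
  obtain ⟨⟨hacc, hcard⟩, hL⟩ := hD
  have hL2 : D.filter (· < 2) = {1} := by
    ext v
    by_cases hv : v < 2
    · simp only [mem_filter, hv, and_true, mem_iff_of_filter_lt_eq hL (hv.trans (by norm_num))]
    · simp only [mem_filter, hv, and_false, mem_singleton, false_iff]
      omega
  have h0 : 0 ∉ D := by simp [mem_iff_of_filter_lt_eq hL]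
  refine ⟨hacc.shiftDown (X := {0}) hn (Or.inr h3) (by simp) (by simpa using h0)
    (by rw [hL2, card_singleton, card_singleton]) ?_, card_shiftDown_of_filter_lt_eq hcard hL2⟩
  intro v hv hvX
  interval_cases v <;> simp_all

/-- A witness against the shift by `3` of `D₂` contains `1` (as `3 ∈ D₂`), and adding the vertex
`1` to its lift gives a witness against `D₁`. -/
lemma shiftDown_two_ne {D₁ D₂ : Finset ℕ} (hn : 4 ≤ n) (hD₁ : D₁ ∈ accPrefixSets n i 2 {0})
    (hD₂ : D₂ ∈ accPrefixSets n i 3 {1}) (hnacc : ¬ IsPathAccDomSet (n - 3) (shiftDown 3 D₂))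
    (h3 : 3 ∈ D₂) : shiftDown 2 D₁ ≠ shiftDown 2 D₂ := by
  intro heq
  obtain ⟨⟨hacc₁, hcard₁⟩, hL₁⟩ := hD₁
  obtain ⟨⟨hacc₂, hcard₂⟩, hL₂⟩ := hD₂
  have h1 : 1 ∉ D₁ := by simp [mem_iff_of_filter_lt_eq hL₁]
  have h2 : 2 ∉ D₂ := by simp [mem_iff_of_filter_lt_eq hL₂]
  have heq₃ : shiftDown 3 D₁ = shiftDown 3 D₂ := by
    simpa only [shiftDown_shiftDown] using congrArg (shiftDown 1) heq
  obtain ⟨E, hED, hEcard, hE⟩ :=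
    (hacc₂.1.shiftDown (Or.inl h2)).exists_disjoint_of_not_isPathAccDomSet hnacc
  have h1E : 1 ∈ E := by
    refine (hE.zero_mem_or_one_mem (by omega)).resolve_left fun h0E => ?_
    exact disjoint_left.1 hED h0E (by simpa using h3)
  refine hacc₁.not_isPathDomSet_of_lift (X := {1}) (by omega) (by simp) (by simpa using h1)
    (heq₃ ▸ hED) ?_ ?_ hE
  · rw [hEcard, card_shiftDown_of_filter_lt_eq hcard₂ hL₂, card_singleton, hcard₁, ← hcard₂]
    have : 0 < D₂.card := card_pos.2 ⟨_, h3⟩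
    omega
  · intro v hv hvX
    exact ⟨1, mem_union_left _ (mem_singleton_self 1), by simp at hvX; omega⟩

lemma shiftDown_mem_of_prefix_one_two (hn : 4 ≤ n) (hD : D ∈ accPrefixSets n i 4 {1, 2}) :
    shiftDown 4 D ∈ pathAccDomSets (n - 4) (i - 2) := by
  obtain ⟨⟨hacc, hcard⟩, hL⟩ := hD
  have h0 : 0 ∉ D := by simp [mem_iff_of_filter_lt_eq hL]
  have h3 : 3 ∉ D := by simp [mem_iff_of_filter_lt_eq hL]
  refine ⟨hacc.shiftDown (X := {0, 3}) hn (Or.inl h3) (by simp [subset_iff])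
    (by simp [h0, h3]) (by rw [hL]; rfl) ?_, card_shiftDown_of_filter_lt_eq hcard hL⟩
  intro v hv hvX
  simp only [mem_insert, mem_singleton] at hvX
  obtain rfl | rfl : v = 1 ∨ v = 2 := by omega
  exacts [⟨0, by simp, by omega⟩, ⟨3, by simp, by omega⟩]

end Families

section Counting

variable {n i : ℕ}

lemma ncard_prefix_zero_union_le (hn : 4 ≤ n) :
    (accPrefixSets n i 2 {0} ∪
        {D ∈ accPrefixSets n i 3 {1} | ¬ IsPathAccDomSet (n - 3) (shiftDown 3 D)}).ncard ≤
      (pathAccDomSets (n - 2) (i - 1)).ncard := by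
  refine Set.ncard_le_ncard_of_injOn (shiftDown 2) ?_ ?_ (finite_pathAccDomSets _ _)
  · rintro D (hD | ⟨hD, hnacc⟩)
    · exact shiftDown_mem_of_prefix_zero (by omega) hD
    · exact shiftDown_two_mem_of_prefix_one (by omega) hD
        (three_mem_of_not_isPathAccDomSet hn hD hnacc)
  · have hdisj : Disjoint (accPrefixSets n i 2 {0})
        {D ∈ accPrefixSets n i 3 {1} | ¬ IsPathAccDomSet (n - 3) (shiftDown 3 D)} :=
      Set.disjoint_left.2 fun D hA hB => by
        have h0 := (mem_iff_of_filter_lt_eq hA.2 (by norm_num : 0 < 2)).2 (mem_singleton_self 0)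
        simpa using (mem_iff_of_filter_lt_eq hB.1.2 (by norm_num : 0 < 3)).1 h0
    refine (Set.injOn_union hdisj).2 ⟨(injOn_shiftDown le_rfl {0}).mono fun D hD => hD.2,
      (injOn_shiftDown (by norm_num) {1}).mono fun D hD => hD.1.2, ?_⟩
    rintro D₁ hD₁ D₂ ⟨hD₂, hnacc⟩
    exact shiftDown_two_ne hn hD₁ hD₂ hnacc (three_mem_of_not_isPathAccDomSet hn hD₂ hnacc)

lemma ncard_prefix_one_le :
    {D ∈ accPrefixSets n i 3 {1} | IsPathAccDomSet (n - 3) (shiftDown 3 D)}.ncard ≤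
      (pathAccDomSets (n - 3) (i - 1)).ncard :=
  Set.ncard_le_ncard_of_injOn (shiftDown 3)
    (fun _ hD => ⟨hD.2, card_shiftDown_of_filter_lt_eq hD.1.1.2 hD.1.2⟩)
    ((injOn_shiftDown le_rfl {1}).mono fun _ hD => hD.1.2) (finite_pathAccDomSets _ _)

lemma ncard_prefix_one_two_le (hn : 4 ≤ n) :
    (accPrefixSets n i 4 {1, 2}).ncard ≤ (pathAccDomSets (n - 4) (i - 2)).ncard :=
  Set.ncard_le_ncard_of_injOn (shiftDown 4) (fun _ => shiftDown_mem_of_prefix_one_two hn)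
    ((injOn_shiftDown le_rfl {1, 2}).mono fun _ hD => hD.2) (finite_pathAccDomSets _ _)

lemma ncard_prefix_Ico_le {a k : ℕ} (hak : a < k) :
    (accPrefixSets n i k (Ico a (k - 1))).ncard ≤ (pathDomSets (n - k) (i + a + 1 - k)).ncard := by
  refine Set.ncard_le_ncard_of_injOn (shiftDown k) (fun D hD => ?_)
    ((injOn_shiftDown le_rfl _).mono fun _ hD => hD.2) (finite_pathDomSets _ _)
  have hk : k - 1 ∉ D := by simp [mem_iff_of_filter_lt_eq hD.2 (show k - 1 < k by omega)]
  have := shiftDown_mem_pathDomSets ⟨hD.1.1.1, hD.1.2⟩ hD.2 hk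
  rwa [Nat.card_Ico, show i - (k - 1 - a) = i + a + 1 - k by omega] at this

lemma pathAccDomSets_subset (hn : i + 2 < n) :
    pathAccDomSets n i ⊆
      (accPrefixSets n i 2 {0} ∪
        {D ∈ accPrefixSets n i 3 {1} | ¬ IsPathAccDomSet (n - 3) (shiftDown 3 D)}) ∪
      {D ∈ accPrefixSets n i 3 {1} | IsPathAccDomSet (n - 3) (shiftDown 3 D)} ∪
      accPrefixSets n i 4 {1, 2} ∪
      (⋃ k ∈ Icc 3 i, accPrefixSets n i k (Ico 0 (k - 1))) ∪
      ⋃ k ∈ Icc 5 (i + 1), accPrefixSets n i k (Ico 1 (k - 1)) := by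
  intro D hD
  obtain ⟨a, ha, b, hab, hb, hL⟩ := hD.1.1.exists_filter_lt_eq_Ico (by rw [hD.2]; exact hn)
  rw [hD.2] at hb
  have hpre : D ∈ accPrefixSets n i (b + 1) (Ico a b) := ⟨hD, hL⟩
  simp only [Set.mem_union]
  interval_cases a
  · obtain rfl | hb2 : b = 1 ∨ 2 ≤ b := by omega
    · exact Or.inl <| Or.inl <| Or.inl <| Or.inl <| Or.inl hpre
    · exact Or.inl <| Or.inr <|
        Set.mem_biUnion (x := b + 1) (mem_Icc.2 ⟨by omega, by omega⟩) hpre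
  · obtain rfl | rfl | hb4 : b = 2 ∨ b = 3 ∨ 4 ≤ b := by omega
    · by_cases hacc : IsPathAccDomSet (n - 3) (shiftDown 3 D)
      · exact Or.inl <| Or.inl <| Or.inl <| Or.inr ⟨hpre, hacc⟩
      · exact Or.inl <| Or.inl <| Or.inl <| Or.inl <| Or.inr ⟨hpre, hacc⟩
    · exact Or.inl <| Or.inl <| Or.inr hpre
    · exact Or.inr <| Set.mem_biUnion (x := b + 1) (mem_Icc.2 ⟨by omega, by omega⟩) hpre

end Counting

theorem ncard_pathAccDomSets_le {n i : ℕ} (hn : 4 ≤ n) (hi : i + 2 < n) :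
    (pathAccDomSets n i).ncard ≤
      (pathAccDomSets (n - 2) (i - 1)).ncard + (pathAccDomSets (n - 3) (i - 1)).ncard +
        (pathAccDomSets (n - 4) (i - 2)).ncard +
        (∑ k ∈ Icc 3 i, (pathDomSets (n - k) (i + 1 - k)).ncard) +
        ∑ k ∈ Icc 5 (i + 1), (pathDomSets (n - k) (i + 2 - k)).ncard := by
  have hsub (k L) : accPrefixSets n i k L ⊆ pathAccDomSets n i := fun _ hD => hD.1
  refine (Set.ncard_le_ncard (pathAccDomSets_subset hi)
    ((finite_pathAccDomSets n i).subset ?_)).trans ?_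
  · refine Set.union_subset (Set.union_subset (Set.union_subset (Set.union_subset
      (Set.union_subset (hsub _ _) ?_) ?_) (hsub _ _)) ?_) ?_
    · exact (Set.sep_subset _ _).trans (hsub _ _)
    · exact (Set.sep_subset _ _).trans (hsub _ _)
    · exact Set.iUnion₂_subset fun _ _ => hsub _ _
    · exact Set.iUnion₂_subset fun _ _ => hsub _ _
  refine (Set.ncard_union_le _ _).trans (add_le_add ((Set.ncard_union_le _ _).trans
    (add_le_add ?_ ?_)) ?_)
  · refine (Set.ncard_union_le _ _).trans (add_le_add ?_ (ncard_prefix_one_two_le hn))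
    exact (Set.ncard_union_le _ _).trans
      (add_le_add (ncard_prefix_zero_union_le hn) ncard_prefix_one_le)
  · exact (set_ncard_biUnion_le _ _).trans <| sum_le_sum fun k hk =>
      ncard_prefix_Ico_le (by simp only [mem_Icc] at hk; omega)
  · exact (set_ncard_biUnion_le _ _).trans <| sum_le_sum fun k hk =>
      ncard_prefix_Ico_le (by simp only [mem_Icc] at hk; omega)

section Transfer

variable {n : ℕ}

lemma exists_map_valEmbedding_eq {T : Finset ℕ} (hT : T ⊆ range n) :
    ∃ S : Finset (Fin n), S.map Fin.valEmbedding = T :=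
  ⟨T.attachFin fun _ hm => mem_range.1 (hT hm), map_valEmbedding_attachFin _⟩

lemma isDomSet_pathGraph_iff (S : Finset (Fin n)) :
    IsDomSet (SimpleGraph.pathGraph n) S ↔ IsPathDomSet n (S.map Fin.valEmbedding) := by
  have hsub : S.map Fin.valEmbedding ⊆ range n := fun v hv => by
    obtain ⟨u, -, rfl⟩ := mem_map.1 hv
    exact mem_range.2 u.isLt
  simp only [IsDomSet, IsPathDomSet, hsub, true_and, SimpleGraph.pathGraph_adj]
  constructor
  · intro h v hv hvS
    obtain ⟨u, huS, hu⟩ := h ⟨v, hv⟩ fun h' => hvS (mem_map_of_mem _ h')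
    exact ⟨u, mem_map_of_mem _ huS, hu⟩
  · intro h v hvS
    obtain ⟨u, huS, hu⟩ := h v v.isLt fun h' => hvS ((mem_map' Fin.valEmbedding).1 h')
    obtain ⟨w, hwS, rfl⟩ := mem_map.1 huS
    exact ⟨w, hwS, hu⟩

lemma isAccDomSet_pathGraph_iff (S : Finset (Fin n)) :
    IsAccDomSet (SimpleGraph.pathGraph n) S ↔ IsPathAccDomSet n (S.map Fin.valEmbedding) := by
  refine and_congr (isDomSet_pathGraph_iff S)
    ⟨fun h E hES hcard hE => ?_, fun h E hES hcard hE => ?_⟩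
  · obtain ⟨E, rfl⟩ := exists_map_valEmbedding_eq hE.1
    exact h E (disjoint_left.1 ((disjoint_map _).1 hES)) (by simpa using hcard)
      ((isDomSet_pathGraph_iff E).2 hE)
  · exact h _ ((disjoint_map _).2 (disjoint_left.2 hES)) (by simpa using hcard)
      ((isDomSet_pathGraph_iff E).1 hE)

lemma ncard_setOf_map_valEmbedding (P : Finset ℕ → Prop) (hP : ∀ T, P T → T ⊆ range n) :
    {S : Finset (Fin n) | P (S.map Fin.valEmbedding)}.ncard = {T | P T}.ncard := by
  rw [← Set.ncard_image_of_injective _ (map_injective Fin.valEmbedding)]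
  congr
  ext T
  constructor
  · rintro ⟨S, hS, rfl⟩
    exact hS
  · intro hT
    obtain ⟨S, rfl⟩ := exists_map_valEmbedding_eq (hP T hT)
    exact ⟨S, hT, rfl⟩

lemma numDomSets_pathGraph (i : ℕ) :
    numDomSets (SimpleGraph.pathGraph n) i = (pathDomSets n i).ncard := by
  simp only [numDomSets, isDomSet_pathGraph_iff, ← card_map Fin.valEmbedding]
  exact ncard_setOf_map_valEmbedding (fun T => IsPathDomSet n T ∧ T.card = i) fun _ hT => hT.1.1

lemma numAccDomSets_pathGraph (i : ℕ) :
    numAccDomSets (SimpleGraph.pathGraph n) i = (pathAccDomSets n i).ncard := by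
  simp only [numAccDomSets, isAccDomSet_pathGraph_iff, ← card_map Fin.valEmbedding]
  exact ncard_setOf_map_valEmbedding (fun T => IsPathAccDomSet n T ∧ T.card = i)
    fun _ hT => hT.1.1.1

end Transfer

theorem path_numAccDomSets_upper_general (n i : ℕ) (hn : 6 ≤ n)
    (h2 : i ≤ n / 2) :
    numAccDomSets (SimpleGraph.pathGraph n) i ≤
      numAccDomSets (SimpleGraph.pathGraph (n - 2)) (i - 1) +
      numAccDomSets (SimpleGraph.pathGraph (n - 3)) (i - 1) +
      numAccDomSets (SimpleGraph.pathGraph (n - 4)) (i - 2) +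
      (∑ k ∈ Finset.Icc 3 i, numDomSets (SimpleGraph.pathGraph (n - k)) (i + 1 - k)) +
      (∑ k ∈ Finset.Icc 5 (i + 1), numDomSets (SimpleGraph.pathGraph (n - k)) (i + 2 - k)) := by
  simp only [numAccDomSets_pathGraph, numDomSets_pathGraph]
  exact ncard_pathAccDomSets_le (by omega) (by omega)

/-- Upper bound for the number of accurate dominating sets of the path `P_n` of
cardinality `i`, for `⌈n/3⌉ ≤ i ≤ ⌊n/2⌋`. -/
theorem path_numAccDomSets_upper (n i : ℕ) (hn : 6 ≤ n)
    (h1 : (n + 2) / 3 ≤ i) (h2 : i ≤ n / 2) :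
    numAccDomSets (SimpleGraph.pathGraph n) i ≤
      numAccDomSets (SimpleGraph.pathGraph (n - 2)) (i - 1) +
      numAccDomSets (SimpleGraph.pathGraph (n - 3)) (i - 1) +
      numAccDomSets (SimpleGraph.pathGraph (n - 4)) (i - 2) +
      (∑ k ∈ Finset.Icc 3 i, numDomSets (SimpleGraph.pathGraph (n - k)) (i + 1 - k)) +
      (∑ k ∈ Finset.Icc 5 (i + 1), numDomSets (SimpleGraph.pathGraph (n - k)) (i + 2 - k)) :=
  path_numAccDomSets_upper_general n i hn h2
end

section
/- Let n ≥ 6 and let i be an integer with ⌊n/3⌋ + 2 ≤ i ≤ ⌊n/2⌋. Then the number of accurate dominating sets of the cycle C_n of cardinality i satisfies d_a(C_n, i) ≥ Σ_{k=3}^{i−1} (k+2) · d(P_{n−k−2}, i−k). -/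
/-!
Double counting. For `3 ≤ k`, a dominating set `S` of the path `P_{n-k-2}` gives, for each of the
`n` rotations, a subset of `C_n` of size `k + |S|`: a run of `k` consecutive vertices, a gap, a
copy of `S` on the next `n - k - 2` vertices, and a second gap. It dominates, and it is accurate
because the middle vertex of the run has its closed neighbourhood inside the set, so no set
disjoint from it can dominate. The run is a maximal run of the resulting set and is recovered from
any of its vertices, so marking one of `k + 2` positions gives an injection into pairs (accurate
dominating set `D`, vertex of `D` with a flag). Hence
`n · Σ (k + 2) d(P_{n-k-2}, i-k) ≤ 2i · d_a(C_n, i) ≤ n · d_a(C_n, i)`.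
-/

open Finset SimpleGraph
open scoped Fin.NatCast Fin.CommRing

section Domination

variable {V : Type*} (G : SimpleGraph V)

open scoped Classical in
noncomputable def domSets [Fintype V] (i : ℕ) : Finset (Finset V) :=
  {D | IsDomSet G D ∧ #D = i}

open scoped Classical in
noncomputable def accDomSets [Fintype V] (i : ℕ) : Finset (Finset V) :=
  {D | IsAccDomSet G D ∧ #D = i}

lemma numDomSets_eq_card_domSets [Fintype V] (i : ℕ) : numDomSets G i = #(domSets G i) := by
  classical
  rw [numDomSets, domSets, ← Set.ncard_coe_finset, coe_filter]
  simp

lemma numAccDomSets_eq_card_accDomSets [Fintype V] (i : ℕ) :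
    numAccDomSets G i = #(accDomSets G i) := by
  classical
  rw [numAccDomSets, accDomSets, ← Set.ncard_coe_finset, coe_filter]
  simp

lemma card_sigma_accDomSets [Fintype V] (i : ℕ) :
    #((accDomSets G i).sigma fun D => D ×ˢ (univ : Finset Bool)) =
      numAccDomSets G i * (2 * i) := by
  classical
  rw [card_sigma, numAccDomSets_eq_card_accDomSets, ← smul_eq_mul, ← sum_const]
  refine sum_congr rfl fun D hD => ?_
  rw [card_product, card_univ, Fintype.card_bool, (mem_filter.1 hD).2.2, mul_comm]

variable {G}

lemma IsDomSet.isAccDomSet_of_neighbor_mem {D : Finset V} (hD : IsDomSet G D) {v : V}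
    (hv : v ∈ D) (hN : ∀ w, G.Adj v w → w ∈ D) : IsAccDomSet G D := by
  refine ⟨hD, fun E hE _ hE' => ?_⟩
  obtain ⟨u, hu, huv⟩ := hE' v fun h => hE v h hv
  exact hE u hu (hN u huv.symm)

end Domination

section MaxRun

variable {R : Type*} [AddCommGroupWithOne R]

def IsMaxRun (D : Finset R) (β : R) (k : ℕ) : Prop :=
  β - 1 ∉ D ∧ (∀ d < k, β + (d : R) ∈ D) ∧ β + (k : R) ∉ D

lemma IsMaxRun.eq_of_add_eq_of_le {D : Finset R} {β β' : R} {k k' d d' : ℕ}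
    (h : IsMaxRun D β k) (h' : IsMaxRun D β' k') (hd' : d' < k') (hle : d ≤ d')
    (heq : β + d = β' + d') : β = β' := by
  have hβ : β = β' + ((d' - d : ℕ) : R) := by
    rw [Nat.cast_sub hle, ← add_sub_assoc, ← heq, add_sub_cancel_right]
  obtain hdd | hdd := Nat.eq_zero_or_pos (d' - d)
  · rw [hβ, hdd, Nat.cast_zero, add_zero]
  · refine absurd (h'.2.1 (d' - d - 1) (by omega)) ?_
    rw [Nat.cast_sub (by omega : 1 ≤ d' - d), Nat.cast_one, ← add_sub_assoc, ← hβ]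
    exact h.1

lemma IsMaxRun.eq_of_add_eq {D : Finset R} {β β' : R} {k k' d d' : ℕ}
    (h : IsMaxRun D β k) (h' : IsMaxRun D β' k') (hd : d < k) (hd' : d' < k')
    (heq : β + d = β' + d') : β = β' ∧ k = k' := by
  have hβ : β = β' := by
    rcases le_total d d' with hle | hle
    · exact h.eq_of_add_eq_of_le h' hd' hle heq
    · exact (h'.eq_of_add_eq_of_le h hd hle heq.symm).symm
  subst hβ
  refine ⟨rfl, le_antisymm ?_ ?_⟩
  · by_contra! hk
    exact h'.2.2 (h.2.1 k' hk)
  · by_contra! hk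
    exact h.2.2 (h'.2.1 k hk)

end MaxRun

section Cycle

variable {n : ℕ} [NeZero n]

lemma cycleGraph_adj_iff_eq_add_one (hn : 2 ≤ n) {u v : Fin n} :
    (cycleGraph n).Adj u v ↔ v = u + 1 ∨ u = v + 1 := by
  obtain ⟨m, rfl⟩ : ∃ m, n = m + 2 := ⟨n - 2, by omega⟩
  rw [cycleGraph_adj, sub_eq_iff_eq_add', sub_eq_iff_eq_add', or_comm]

lemma cycleGraph_adj_add_natCast_succ (hn : 2 ≤ n) (β : Fin n) (a : ℕ) :
    (cycleGraph n).Adj (β + a) (β + (a + 1 : ℕ)) := by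
  rw [cycleGraph_adj_iff_eq_add_one hn, Nat.cast_succ, add_assoc]
  exact Or.inl rfl

lemma cycleGraph_adj_add_natCast_of_succ (hn : 2 ≤ n) (β : Fin n) {a b : ℕ}
    (h : a + 1 = b ∨ b + 1 = a) : (cycleGraph n).Adj (β + a) (β + b) := by
  rcases h with rfl | rfl
  · exact cycleGraph_adj_add_natCast_succ hn β a
  · exact (cycleGraph_adj_add_natCast_succ hn β b).symm

lemma val_add_natCast_sub (β : Fin n) {a : ℕ} (ha : a < n) : (β + a - β).val = a := by
  rw [add_sub_cancel_left, Fin.val_natCast, Nat.mod_eq_of_lt ha]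

lemma eq_add_val_sub (β v : Fin n) : v = β + ((v - β).val : ℕ) := by
  rw [Fin.cast_val_eq_self, add_sub_cancel]

lemma natCast_inj_of_lt {a b : ℕ} (ha : a < n) (hb : b < n) (h : (a : Fin n) = b) : a = b := by
  simpa [Fin.val_cast_of_lt ha, Fin.val_cast_of_lt hb] using congrArg Fin.val h

def blockPathOffsets (k : ℕ) {m : ℕ} (S : Finset (Fin m)) : Finset ℕ :=
  range k ∪ S.image fun p => k + 1 + p.val

def blockPathSet (β : Fin n) (k : ℕ) {m : ℕ} (S : Finset (Fin m)) : Finset (Fin n) :=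
  {v | (v - β).val ∈ blockPathOffsets k S}

variable {k m : ℕ} {S : Finset (Fin m)}

lemma mem_blockPathOffsets {a : ℕ} :
    a ∈ blockPathOffsets k S ↔ a < k ∨ ∃ p ∈ S, k + 1 + p.val = a := by
  simp [blockPathOffsets]

lemma blockPathOffsets_subset_range : blockPathOffsets k S ⊆ range (k + 1 + m) := by
  intro a ha
  rw [mem_blockPathOffsets] at ha
  rw [mem_range]
  rcases ha with ha | ⟨p, -, rfl⟩ <;> omega

lemma card_blockPathOffsets : #(blockPathOffsets k S) = k + #S := by
  rw [blockPathOffsets, card_union_of_disjoint, card_range,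
    card_image_of_injective _ fun p q h => Fin.ext (by omega)]
  rw [Finset.disjoint_left]
  intro a ha hb
  obtain ⟨p, -, rfl⟩ := mem_image.1 hb
  rw [mem_range] at ha
  omega

lemma add_natCast_mem_blockPathSet {β : Fin n} {a : ℕ} (ha : a < n) :
    β + a ∈ blockPathSet β k S ↔ a ∈ blockPathOffsets k S := by
  rw [blockPathSet, mem_filter, val_add_natCast_sub β ha]
  exact and_iff_right (mem_univ _)

lemma add_natCast_mem_blockPathSet_of_lt {β : Fin n} {a : ℕ} (hkn : k < n) (ha : a < k) :
    β + a ∈ blockPathSet β k S :=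
  (add_natCast_mem_blockPathSet (by omega)).2 (mem_blockPathOffsets.2 (Or.inl ha))

lemma card_blockPathSet (β : Fin n) (h : k + 1 + m ≤ n) : #(blockPathSet β k S) = k + #S := by
  have hinj : Function.Injective fun v : Fin n => (v - β).val :=
    fun u v huv => sub_left_inj.1 (Fin.ext huv)
  rw [← card_blockPathOffsets, ← card_image_of_injective _ hinj]
  congr 1
  ext a
  simp only [mem_image, blockPathSet, mem_filter, mem_univ, true_and]
  constructor
  · rintro ⟨v, hv, rfl⟩
    exact hv
  · intro ha
    have han : a < n := by have := mem_range.1 (blockPathOffsets_subset_range ha); omega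
    exact ⟨β + a, by rwa [val_add_natCast_sub β han], val_add_natCast_sub β han⟩

lemma blockPathSet_injective {β : Fin n} (h : k + 1 + m ≤ n) {S' : Finset (Fin m)}
    (hS : blockPathSet β k S = blockPathSet β k S') : S = S' := by
  ext p
  have hp : k + 1 + p.val < n := by omega
  have key : ∀ T : Finset (Fin m),
      p ∈ T ↔ β + ((k + 1 + p.val : ℕ) : Fin n) ∈ blockPathSet β k T := by
    intro T
    rw [add_natCast_mem_blockPathSet hp, mem_blockPathOffsets]
    constructor
    · exact fun hpT => Or.inr ⟨p, hpT, rfl⟩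
    · rintro (h | ⟨q, hq, hqp⟩)
      · omega
      · rwa [← Fin.ext (by omega : q.val = p.val)]
  rw [key, key S', hS]

lemma isDomSet_blockPathSet (hk : 1 ≤ k) (hkn : k + 2 ≤ n) (β : Fin n)
    {S : Finset (Fin (n - k - 2))} (hS : IsDomSet (pathGraph (n - k - 2)) S) :
    IsDomSet (cycleGraph n) (blockPathSet β k S) := by
  intro v hv
  rw [eq_add_val_sub β v] at hv ⊢
  set r := (v - β).val
  have hrn : r < n := (v - β).isLt
  rw [add_natCast_mem_blockPathSet hrn, mem_blockPathOffsets] at hv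
  push Not at hv
  by_cases hrk : r = k
  · exact ⟨β + ((k - 1 : ℕ) : Fin n),
      add_natCast_mem_blockPathSet_of_lt (by omega) (by omega),
      cycleGraph_adj_add_natCast_of_succ (by omega) β (by omega)⟩
  by_cases hrlast : r = n - 1
  · refine ⟨β + ((0 : ℕ) : Fin n),
      add_natCast_mem_blockPathSet_of_lt (by omega) (by omega), ?_⟩
    have hwrap : β + ((0 : ℕ) : Fin n) = β + ((r + 1 : ℕ) : Fin n) := by
      rw [show r + 1 = n by omega, Fin.natCast_self, Nat.cast_zero]
    rw [hwrap]
    exact (cycleGraph_adj_add_natCast_succ (by omega) β r).symm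
  obtain ⟨q, hq, hqp⟩ := hS ⟨r - (k + 1), by omega⟩ fun h => hv.2 _ h (by simp only; omega)
  rw [pathGraph_adj] at hqp
  exact ⟨β + ((k + 1 + q.val : ℕ) : Fin n),
    (add_natCast_mem_blockPathSet (by omega)).2 (mem_blockPathOffsets.2 (Or.inr ⟨q, hq, rfl⟩)),
    cycleGraph_adj_add_natCast_of_succ (by omega) β (by simp only at hqp; omega)⟩

lemma isAccDomSet_blockPathSet (hk : 3 ≤ k) (hkn : k + 2 ≤ n) (β : Fin n)
    {S : Finset (Fin (n - k - 2))} (hS : IsDomSet (pathGraph (n - k - 2)) S) :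
    IsAccDomSet (cycleGraph n) (blockPathSet β k S) := by
  refine (isDomSet_blockPathSet (by omega) hkn β hS).isAccDomSet_of_neighbor_mem
    (v := β + ((1 : ℕ) : Fin n)) (add_natCast_mem_blockPathSet_of_lt (by omega) (by omega))
    fun w hw => ?_
  rcases (cycleGraph_adj_iff_eq_add_one (by omega)).1 hw with rfl | h
  · rw [add_assoc, ← Nat.cast_succ]
    exact add_natCast_mem_blockPathSet_of_lt (by omega) (by omega)
  · rw [Nat.cast_one] at h
    obtain rfl : β = w := add_right_cancel h
    have hβ : β + ((0 : ℕ) : Fin n) ∈ blockPathSet β k S :=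
      add_natCast_mem_blockPathSet_of_lt (by omega) (by omega)
    rwa [Nat.cast_zero, add_zero] at hβ

lemma isMaxRun_blockPathSet (hkn : k + 2 ≤ n) (β : Fin n) (S : Finset (Fin (n - k - 2))) :
    IsMaxRun (blockPathSet β k S) β k := by
  refine ⟨?_, fun d hd => add_natCast_mem_blockPathSet_of_lt (by omega) hd, ?_⟩
  · rw [sub_eq_add_neg, ← zero_sub, ← Fin.natCast_self, ← Nat.cast_pred (by omega),
      add_natCast_mem_blockPathSet (by omega), mem_blockPathOffsets]
    rintro (h | ⟨p, -, hp⟩) <;> omega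
  · rw [add_natCast_mem_blockPathSet (by omega), mem_blockPathOffsets]
    rintro (h | ⟨p, -, hp⟩) <;> omega

end Cycle

section Counting

/-- Encodes the `k + 2` values of `j` injectively by a run vertex and a flag; this is where
`k + 2 ≤ 2 * k` enters. -/
def runMarker {n : ℕ} [NeZero n] (β : Fin n) (k j : ℕ) : Fin n × Bool :=
  if j < k then (β + j, false) else (β + (j - k : ℕ), true)

noncomputable def blockPathData (n i : ℕ) :
    Finset (Σ k : ℕ, ℕ × Fin n × Finset (Fin (n - k - 2))) :=
  (Icc 3 (i - 1)).sigma fun k =>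
    range (k + 2) ×ˢ univ ×ˢ domSets (pathGraph (n - k - 2)) (i - k)

def blockPathEncode {n : ℕ} [NeZero n] :
    (Σ k : ℕ, ℕ × Fin n × Finset (Fin (n - k - 2))) → Σ _ : Finset (Fin n), Fin n × Bool
  | ⟨k, j, β, S⟩ => ⟨blockPathSet β k S, runMarker β k j⟩

lemma card_blockPathData (n i : ℕ) :
    #(blockPathData n i) =
      n * ∑ k ∈ Icc 3 (i - 1), (k + 2) * numDomSets (pathGraph (n - k - 2)) (i - k) := by
  rw [blockPathData, card_sigma, mul_sum]
  refine sum_congr rfl fun k _ => ?_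
  rw [card_product, card_product, card_range, card_univ, Fintype.card_fin,
    numDomSets_eq_card_domSets]
  ring

variable {n i : ℕ} [NeZero n]

lemma blockPathEncode_mem (hi : i < n) {x : Σ k : ℕ, ℕ × Fin n × Finset (Fin (n - k - 2))}
    (hx : x ∈ blockPathData n i) :
    blockPathEncode x ∈ (accDomSets (cycleGraph n) i).sigma fun D => D ×ˢ univ := by
  obtain ⟨k, j, β, S⟩ := x
  simp only [blockPathData, domSets, mem_sigma, mem_product, mem_Icc, mem_range, mem_filter,
    mem_univ, true_and] at hx
  obtain ⟨⟨hk3, hki⟩, hj, hS, hScard⟩ := hx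
  simp only [blockPathEncode, accDomSets, mem_sigma, mem_filter, mem_product, mem_univ,
    true_and, and_true]
  refine ⟨⟨isAccDomSet_blockPathSet hk3 (by omega) β hS, ?_⟩, ?_⟩
  · rw [card_blockPathSet β (by omega), hScard]
    omega
  · unfold runMarker
    split_ifs <;> exact add_natCast_mem_blockPathSet_of_lt (by omega) (by omega)

lemma blockPathEncode_injOn (hi : i < n) :
    Set.InjOn (blockPathEncode (n := n)) (blockPathData n i) := by
  rintro ⟨k, j, β, S⟩ hx ⟨k', j', β', S'⟩ hx' heq
  simp only [blockPathData, coe_sigma, Set.mem_sigma_iff, mem_coe, mem_Icc, mem_product,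
    mem_range] at hx hx'
  have hD : blockPathSet β k S = blockPathSet β' k' S' := congrArg Sigma.fst heq
  have hM : runMarker β k j = runMarker β' k' j' := congrArg (fun z => z.2) heq
  have hrun' := isMaxRun_blockPathSet (by omega) β' S'
  rw [← hD] at hrun'
  have key : ∀ {d d' : ℕ}, d < k → d' < k' → β + (d : Fin n) = β' + d' →
      β = β' ∧ k = k' ∧ d = d' := fun hd hd' h => by
    obtain ⟨rfl, rfl⟩ := (isMaxRun_blockPathSet (by omega) β S).eq_of_add_eq hrun' hd hd' h
    exact ⟨rfl, rfl, natCast_inj_of_lt (by omega) (by omega) (add_left_cancel h)⟩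
  obtain ⟨rfl, rfl, rfl⟩ : β = β' ∧ k = k' ∧ j = j' := by
    unfold runMarker at hM
    split_ifs at hM with h h' h' <;> simp only [Prod.mk.injEq, Bool.false_eq_true,
      Bool.true_eq_false, and_false, and_true] at hM
    · exact key h h' hM
    · obtain ⟨hβ, hk, hd⟩ := key (by omega) (by omega) hM
      exact ⟨hβ, hk, by omega⟩
  rw [blockPathSet_injective (by omega) hD]

end Counting

theorem cycle_numAccDomSets_lower_general (n i : ℕ) (hn : 6 ≤ n)
    (h2 : i ≤ n / 2) :
    (∑ k ∈ Finset.Icc 3 (i - 1),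
        (k + 2) * numDomSets (SimpleGraph.pathGraph (n - k - 2)) (i - k)) ≤
    numAccDomSets (SimpleGraph.cycleGraph n) i := by
  have : NeZero n := ⟨by omega⟩
  have hcount :
      n * ∑ k ∈ Icc 3 (i - 1), (k + 2) * numDomSets (pathGraph (n - k - 2)) (i - k) ≤
        numAccDomSets (cycleGraph n) i * (2 * i) := by
    rw [← card_blockPathData, ← card_sigma_accDomSets]
    exact card_le_card_of_injOn _ (fun x hx => blockPathEncode_mem (by omega) hx)
      (blockPathEncode_injOn (by omega))
  have htwo : numAccDomSets (cycleGraph n) i * (2 * i) ≤ n * numAccDomSets (cycleGraph n) i := by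
    rw [mul_comm n]
    exact Nat.mul_le_mul_left _ (by omega)
  exact Nat.le_of_mul_le_mul_left (hcount.trans htwo) (by omega)

/-- Lower bound for the number of accurate dominating sets of the cycle `C_n` of
cardinality `i`, for `⌊n/3⌋ + 2 ≤ i ≤ ⌊n/2⌋`. -/
theorem cycle_numAccDomSets_lower (n i : ℕ) (hn : 6 ≤ n)
    (h1 : n / 3 + 2 ≤ i) (h2 : i ≤ n / 2) :
    (∑ k ∈ Finset.Icc 3 (i - 1),
        (k + 2) * numDomSets (SimpleGraph.pathGraph (n - k - 2)) (i - k)) ≤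
    numAccDomSets (SimpleGraph.cycleGraph n) i :=
  cycle_numAccDomSets_lower_general n i hn h2
end

section
/- For every n ≥ 3 and every integer i ≥ ⌊n/2⌋ + 1, the number of accurate dominating sets of the path P_n of cardinality i is at most the number of accurate dominating sets of the cycle C_n of cardinality i, that is, d_a(P_n, i) ≤ d_a(C_n, i). -/
/-- For every `n ≥ 3` and every `i ≥ ⌊n/2⌋ + 1`, `d_a(P_n, i) ≤ d_a(C_n, i)`. -/
theorem path_numAccDomSets_le_cycle (n i : ℕ) (hn : 3 ≤ n) (hi : n / 2 + 1 ≤ i) :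
    numAccDomSets (SimpleGraph.pathGraph n) i ≤
      numAccDomSets (SimpleGraph.cycleGraph n) i := by
  unfold numAccDomSets
  apply Set.ncard_le_ncard _ (Set.toFinite _)
  rintro D ⟨⟨hdom, -⟩, hcard⟩
  refine ⟨⟨?_, ?_⟩, hcard⟩
  · intro v hv
    obtain ⟨u, hu, hadj⟩ := hdom v hv
    exact ⟨u, hu, SimpleGraph.pathGraph_le_cycleGraph hadj⟩
  · intro E hE hEcard hEdom
    have hsub : E ⊆ Dᶜ := fun v hv => Finset.mem_compl.2 (hE v hv)
    have h1 : E.card ≤ n - D.card := by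
      have := Finset.card_le_card hsub
      simpa [Finset.card_compl] using this
    have h2 : 2 * i > n := by
      have : 2 * (n / 2) + 1 ≥ n := by omega
      omega
    omega
end
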